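/- arXiv:1605.00039 — 10 statements merged into one kernel-verified Lean document; each statement's English description precedes it below -/
import Mathlib

section
/- The function c ↦ ξ(c) is differentiable on (0, ∞) with ξ′(c) = (θ/2)·(η² − ξ(c)²)/ξ(c)² for every c > 0, and it is twice differentiable with ξ″(c) = −(θ²η²/2)·(η² − ξ(c)²)/ξ(c)⁵ for every c > 0. -/
/-!
The zero `ξ(c)` is the inverse of the strictly increasing function
`x ↦ (η log ((η + x) / (η - x)) - 2x) / θ`, whose derivative is `2x² / (θ (η² - x²))`.
A right inverse of a strictly monotone map is monotone and onto, hence continuous, so the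
inverse function theorem gives `ξ'`; and `ξ'` is a function of `ξ` alone, so the chain rule
gives `ξ''`.
-/

open Real Filter Set Topology

section RightInverse

variable {α β : Type*} [LinearOrder α] [TopologicalSpace α] [OrderTopology α]
  [LinearOrder β] [TopologicalSpace β] [OrderTopology β] [DenselyOrdered β]

theorem StrictMonoOn.continuousAt_of_leftInvOn {g : β → α} {f : α → β} {s : Set β} {t : Set α}
    (hg : StrictMonoOn g s) (hgs : MapsTo g s t) (hft : MapsTo f t s) (hgf : LeftInvOn g f t)
    {c : α} (ht : t ∈ 𝓝 c) (hs : s ∈ 𝓝 (f c)) : ContinuousAt f c := by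
  have hmono : MonotoneOn f t := fun a ha b hb hab =>
    not_lt.1 fun hlt => (hab.trans_lt (hgf ha ▸ hgf hb ▸ hg (hft hb) (hft ha) hlt)).false
  have hsurj : s ⊆ f '' t := fun x hx =>
    ⟨g x, hgs hx, hg.injOn (hft (hgs hx)) hx (hgf (hgs hx))⟩
  exact continuousAt_of_monotoneOn_of_image_mem_nhds hmono ht (mem_of_superset hs hsurj)

end RightInverse

/-- `F_c(x) = 0` exactly when `c = paramOfZero η θ x`. -/
noncomputable def paramOfZero (η θ x : ℝ) : ℝ := (η * log ((η + x) / (η - x)) - 2 * x) / θ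

section paramOfZero

variable {η θ x : ℝ}

theorem paramOfZero_zero : paramOfZero η θ 0 = 0 := by
  simp [paramOfZero]

theorem paramOfZero_eq_of_zero (hθ : θ ≠ 0) {c : ℝ}
    (h : 2 * x + θ * c - η * log ((η + x) / (η - x)) = 0) : paramOfZero η θ x = c := by
  rw [paramOfZero, div_eq_iff hθ]
  linarith

theorem hasDerivAt_paramOfZero (h₁ : -η < x) (h₂ : x < η) :
    HasDerivAt (paramOfZero η θ) (2 * x ^ 2 / (θ * (η ^ 2 - x ^ 2))) x := by
  have hp : η + x ≠ 0 := by linarith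
  have hm : η - x ≠ 0 := by linarith
  have hq : HasDerivAt (fun y => (η + y) / (η - y))
      ((1 * (η - x) - (η + x) * (-1)) / (η - x) ^ 2) x :=
    ((hasDerivAt_id x).const_add η).div ((hasDerivAt_id x).const_sub η) hm
  have hlog := (hq.log (div_ne_zero hp hm)).const_mul η |>.sub ((hasDerivAt_id x).const_mul 2)
  refine (hlog.div_const θ).congr_deriv ?_
  have : η ^ 2 - x ^ 2 = (η + x) * (η - x) := by ring
  rw [this]
  field_simp
  ring

theorem strictMonoOn_paramOfZero (hθ : 0 < θ) : StrictMonoOn (paramOfZero η θ) (Ico 0 η) := by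
  refine strictMonoOn_of_deriv_pos (convex_Ico 0 η) (fun x hx => ?_) fun x hx => ?_
  · exact (hasDerivAt_paramOfZero (by linarith [hx.1, hx.2]) hx.2).continuousAt.continuousWithinAt
  · rw [interior_Ico] at hx
    rw [(hasDerivAt_paramOfZero (by linarith [hx.1, hx.2]) hx.2).deriv]
    have : 0 < η ^ 2 - x ^ 2 := by nlinarith [hx.1, hx.2]
    have : 0 < x ^ 2 := by nlinarith [hx.1]
    positivity

end paramOfZero

theorem hasDerivAt_mul_sq_sub_sq_div_sq (η θ : ℝ) {x : ℝ} (hx : x ≠ 0) :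
    HasDerivAt (fun x => θ / 2 * (η ^ 2 - x ^ 2) / x ^ 2) (-(θ * η ^ 2) / x ^ 3) x := by
  have h := ((hasDerivAt_pow 2 x).const_sub (η ^ 2)).const_mul (θ / 2) |>.div
    (hasDerivAt_pow 2 x) (pow_ne_zero 2 hx)
  refine h.congr_deriv ?_
  field_simp
  ring

theorem stmt_2_general (η θ : ℝ) (hθ : 0 < θ) (ξ : ℝ → ℝ)
    (hξ : ∀ c : ℝ, 0 < c → ξ c ∈ Set.Ioo 0 η ∧
      2 * ξ c + θ * c - η * Real.log ((η + ξ c) / (η - ξ c)) = 0) :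
    ∀ c : ℝ, 0 < c →
      HasDerivAt ξ ((θ / 2) * (η ^ 2 - (ξ c) ^ 2) / (ξ c) ^ 2) c ∧
      HasDerivAt (fun c => (θ / 2) * (η ^ 2 - (ξ c) ^ 2) / (ξ c) ^ 2)
        (-(θ ^ 2 * η ^ 2 / 2) * (η ^ 2 - (ξ c) ^ 2) / (ξ c) ^ 5) c := by
  intro c hc
  have hmaps : MapsTo ξ (Ioi 0) (Ioo 0 η) := fun c hc => (hξ c hc).1
  have hinv : LeftInvOn (paramOfZero η θ) ξ (Ioi 0) :=
    fun c hc => paramOfZero_eq_of_zero hθ.ne' (hξ c hc).2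
  have hmono := strictMonoOn_paramOfZero hθ (η := η)
  have hpos : MapsTo (paramOfZero η θ) (Ioo 0 η) (Ioi 0) := fun x hx =>
    paramOfZero_zero (η := η) (θ := θ) ▸
      hmono ⟨le_rfl, hx.1.trans hx.2⟩ (Ioo_subset_Ico_self hx) hx.1
  obtain ⟨hξ₀, hξη⟩ := hmaps hc
  have hcont : ContinuousAt ξ c := (hmono.mono Ioo_subset_Ico_self).continuousAt_of_leftInvOn
    hpos hmaps hinv (Ioi_mem_nhds hc) (Ioo_mem_nhds hξ₀ hξη)
  have hsq : 0 < η ^ 2 - ξ c ^ 2 := by nlinarith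
  have hξ' : HasDerivAt ξ ((θ / 2) * (η ^ 2 - (ξ c) ^ 2) / (ξ c) ^ 2) c := by
    refine ((hasDerivAt_paramOfZero (by linarith) hξη).of_local_left_inverse hcont
      (by positivity) (eventually_of_mem (Ioi_mem_nhds hc) hinv)).congr_deriv ?_
    field_simp
  refine ⟨hξ', ((hasDerivAt_mul_sq_sub_sq_div_sq η θ hξ₀.ne').comp c hξ').congr_deriv ?_⟩
  field_simp

/-- Differentiability of the unique zero `ξ(c)` of
`F_c(x) = 2x + θc − η log((η+x)/(η−x))` in `(0, η)`, with explicit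
first and second derivatives. -/
theorem stmt_2 (η θ : ℝ) (hη : 0 < η) (hθ : 0 < θ) (ξ : ℝ → ℝ)
    (hξ : ∀ c : ℝ, 0 < c → ξ c ∈ Set.Ioo 0 η ∧
      2 * ξ c + θ * c - η * Real.log ((η + ξ c) / (η - ξ c)) = 0) :
    ∀ c : ℝ, 0 < c →
      HasDerivAt ξ ((θ / 2) * (η ^ 2 - (ξ c) ^ 2) / (ξ c) ^ 2) c ∧
      HasDerivAt (fun c => (θ / 2) * (η ^ 2 - (ξ c) ^ 2) / (ξ c) ^ 2)
        (-(θ ^ 2 * η ^ 2 / 2) * (η ^ 2 - (ξ c) ^ 2) / (ξ c) ^ 5) c :=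
  stmt_2_general η θ hθ ξ hξ
end

section
/- As c → 0⁺ one has: ξ(c) → 0, c/ξ(c) → 0, and c·ξ′(c) → 0, where ξ′(c) = (θ/2)·(η² − ξ(c)²)/ξ(c)² is the derivative of ξ. -/
open Real Filter Set Topology

/-!
With `t = ξ / η`, the series `log ((1 + t) / (1 - t)) = 2 ∑ t ^ (2k+1) / (2k+1)` traps
`θ c = η log ((η + ξ) / (η - ξ)) - 2 ξ` between `2 ξ³ / (3 η²)` and `2 ξ³ / (3 (η² - ξ²))`
(the terms beyond the cubic one are dominated by a geometric series). The lower bound gives `ξ³ = O(c)`, so `ξ → 0`; the upper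
bound then gives `c / ξ = O(ξ²)` and `c ξ'(c) ≤ ξ / 3`.
-/

namespace Real

theorem hasSum_log_div_sub_two_mul {t : ℝ} (ht : |t| < 1) :
    HasSum (fun n : ℕ => 2 / (2 * n + 3) * t ^ (2 * n + 3))
      (log ((1 + t) / (1 - t)) - 2 * t) := by
  have h1 : 0 < 1 + t := by linarith [neg_abs_le t]
  have h2 : 0 < 1 - t := by linarith [le_abs_self t]
  have hs := (hasSum_nat_add_iff' 1).2 (hasSum_log_sub_log_of_abs_lt_one ht)
  have hterm : (fun n : ℕ => 2 / (2 * n + 3) * t ^ (2 * n + 3)) =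
      fun n : ℕ => 2 * (1 / (2 * ((n + 1 : ℕ) : ℝ) + 1)) * t ^ (2 * (n + 1) + 1) := by
    ext n; push_cast; ring_nf
  have hfirst : ∑ i ∈ Finset.range 1, 2 * (1 / (2 * (i : ℝ) + 1)) * t ^ (2 * i + 1) = 2 * t := by
    norm_num
  rwa [hfirst, ← hterm, ← log_div h1.ne' h2.ne'] at hs

theorem two_mul_add_le_log_div {t : ℝ} (h0 : 0 ≤ t) (h1 : t < 1) :
    2 * t + 2 * t ^ 3 / 3 ≤ log ((1 + t) / (1 - t)) := by
  have hs := hasSum_log_div_sub_two_mul (abs_lt.2 ⟨by linarith, h1⟩)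
  have := le_hasSum hs 0 fun n _ => by positivity
  norm_num at this
  linarith

theorem log_div_le_two_mul_add {t : ℝ} (h0 : 0 ≤ t) (h1 : t < 1) :
    log ((1 + t) / (1 - t)) ≤ 2 * t + 2 * t ^ 3 / (3 * (1 - t ^ 2)) := by
  have hs := hasSum_log_div_sub_two_mul (abs_lt.2 ⟨by linarith, h1⟩)
  have hgeom :=
    (hasSum_geometric_of_lt_one (sq_nonneg t) (by nlinarith)).mul_left (2 / 3 * t ^ 3)
  have := hasSum_le (fun n => ?_) hs hgeom
  · rw [← div_eq_mul_inv, mul_div_assoc, ← mul_div_mul_comm] at this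
    linarith
  · rw [show t ^ (2 * n + 3) = t ^ 3 * (t ^ 2) ^ n by ring, mul_assoc (2 / 3)]
    exact mul_le_mul_of_nonneg_right (by gcongr; linarith) (by positivity)

theorem mul_log_add_div_sub_sub_two_mul_mem_Icc {η x : ℝ} (hη : 0 < η) (hx0 : 0 ≤ x)
    (hxη : x < η) :
    η * log ((η + x) / (η - x)) - 2 * x ∈
      Icc (2 * x ^ 3 / (3 * η ^ 2)) (2 * x ^ 3 / (3 * (η ^ 2 - x ^ 2))) := by
  have ht0 : 0 ≤ x / η := by positivity
  have ht1 : x / η < 1 := (div_lt_one hη).2 hxη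
  have hsub : 0 < η - x := by linarith
  have hratio : (1 + x / η) / (1 - x / η) = (η + x) / (η - x) := by
    field_simp
  have hlow := two_mul_add_le_log_div ht0 ht1
  have hup := log_div_le_two_mul_add ht0 ht1
  rw [hratio] at hlow hup
  constructor
  · have := mul_le_mul_of_nonneg_left hlow hη.le
    have e : η * (2 * (x / η) + 2 * (x / η) ^ 3 / 3) = 2 * x + 2 * x ^ 3 / (3 * η ^ 2) := by
      field_simp
    linarith
  · have := mul_le_mul_of_nonneg_left hup hη.le
    have e : η * (2 * (x / η) + 2 * (x / η) ^ 3 / (3 * (1 - (x / η) ^ 2))) =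
        2 * x + 2 * x ^ 3 / (3 * (η ^ 2 - x ^ 2)) := by
      have : η ^ 2 - x ^ 2 ≠ 0 := by nlinarith
      field_simp
    linarith

end Real

theorem Filter.Tendsto.of_pow_le {α : Type*} {l : Filter α} {f g : α → ℝ} {n : ℕ} (hn : n ≠ 0)
    (hf : ∀ᶠ a in l, 0 ≤ f a) (hfg : ∀ᶠ a in l, f a ^ n ≤ g a) (hg : Tendsto g l (𝓝 0)) :
    Tendsto f l (𝓝 0) := by
  have hroot : Tendsto (fun a => g a ^ (n⁻¹ : ℝ)) l (𝓝 0) := by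
    simpa [zero_rpow (inv_ne_zero (Nat.cast_ne_zero.2 hn))] using
      hg.rpow_const (Or.inr (inv_nonneg.2 n.cast_nonneg))
  refine squeeze_zero' hf ?_ hroot
  filter_upwards [hf, hfg] with a ha hag
  calc f a = (f a ^ n) ^ (n⁻¹ : ℝ) := (pow_rpow_inv_natCast ha hn).symm
    _ ≤ g a ^ (n⁻¹ : ℝ) := rpow_le_rpow (pow_nonneg ha n) hag (by positivity)

section CubeBounds

variable {η θ c x : ℝ}

theorem div_le_of_mul_le_cube_div (hθ : 0 < θ) (hx : 0 < x) (hxη : x < η)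
    (h : θ * c ≤ 2 * x ^ 3 / (3 * (η ^ 2 - x ^ 2))) :
    c / x ≤ 2 * x ^ 2 / (3 * θ * (η ^ 2 - x ^ 2)) := by
  have hd : 0 < η ^ 2 - x ^ 2 := by nlinarith
  rw [le_div_iff₀ (by positivity)] at h
  rw [div_le_div_iff₀ hx (by positivity)]
  nlinarith

theorem mul_deriv_le_of_mul_le_cube_div (hx : 0 < x) (hxη : x < η)
    (h : θ * c ≤ 2 * x ^ 3 / (3 * (η ^ 2 - x ^ 2))) :
    c * (θ / 2 * (η ^ 2 - x ^ 2) / x ^ 2) ≤ x / 3 := by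
  have hd : 0 < η ^ 2 - x ^ 2 := by nlinarith
  rw [le_div_iff₀ (by positivity)] at h
  rw [show c * (θ / 2 * (η ^ 2 - x ^ 2) / x ^ 2) = θ * c * (η ^ 2 - x ^ 2) / (2 * x ^ 2) by
      ring,
    div_le_div_iff₀ (by positivity) (by norm_num)]
  nlinarith

end CubeBounds

/-- Limits as `c → 0⁺` of the unique zero `ξ(c)` of
`F_c(x) = 2x + θc − η log((η+x)/(η−x))` in `(0, η)`:
`ξ(c) → 0`, `c/ξ(c) → 0` and `c·ξ′(c) → 0`. -/
theorem stmt_3 (η θ : ℝ) (hη : 0 < η) (hθ : 0 < θ) (ξ : ℝ → ℝ)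
    (hξ : ∀ c : ℝ, 0 < c → ξ c ∈ Set.Ioo 0 η ∧
      2 * ξ c + θ * c - η * Real.log ((η + ξ c) / (η - ξ c)) = 0) :
    Filter.Tendsto ξ (nhdsWithin 0 (Set.Ioi 0)) (nhds 0) ∧
    Filter.Tendsto (fun c => c / ξ c) (nhdsWithin 0 (Set.Ioi 0)) (nhds 0) ∧
    Filter.Tendsto (fun c => c * ((θ / 2) * (η ^ 2 - (ξ c) ^ 2) / (ξ c) ^ 2))
      (nhdsWithin 0 (Set.Ioi 0)) (nhds 0) := by
  have hev : ∀ᶠ c in 𝓝[>] (0 : ℝ), 0 < c ∧ 0 < ξ c ∧ ξ c < η ∧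
      θ * c ∈ Icc (2 * ξ c ^ 3 / (3 * η ^ 2)) (2 * ξ c ^ 3 / (3 * (η ^ 2 - ξ c ^ 2))) := by
    filter_upwards [self_mem_nhdsWithin] with c hc
    obtain ⟨⟨hx0, hxη⟩, hF⟩ := hξ c hc
    refine ⟨hc, hx0, hxη, ?_⟩
    rw [show θ * c = η * log ((η + ξ c) / (η - ξ c)) - 2 * ξ c by linarith]
    exact mul_log_add_div_sub_sub_two_mul_mem_Icc hη hx0.le hxη
  have hξ0 : Tendsto ξ (𝓝[>] 0) (𝓝 0) := by
    refine Tendsto.of_pow_le three_ne_zero (hev.mono fun c hc => hc.2.1.le)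
      (hev.mono fun c ⟨_, _, _, hlow, _⟩ => ?_) (g := fun c => 3 * η ^ 2 / 2 * (θ * c)) ?_
    · rw [div_le_iff₀ (by positivity)] at hlow
      linarith
    · exact tendsto_nhdsWithin_of_tendsto_nhds (Continuous.tendsto' (by fun_prop) _ _ (by simp))
  have hratio : Tendsto (fun x => 2 * x ^ 2 / (3 * θ * (η ^ 2 - x ^ 2))) (𝓝 0) (𝓝 0) := by
    have hcont : ContinuousAt (fun x => 2 * x ^ 2 / (3 * θ * (η ^ 2 - x ^ 2))) 0 :=
      ContinuousAt.div (by fun_prop) (by fun_prop) (by simp [hθ.ne', hη.ne'])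
    simpa using hcont.tendsto
  refine ⟨hξ0, squeeze_zero' ?_ ?_ (hratio.comp hξ0),
    squeeze_zero' ?_ ?_ (by simpa using hξ0.div_const 3)⟩
  · exact hev.mono fun c ⟨hc, hx, _⟩ => div_nonneg hc.le hx.le
  · exact hev.mono fun c ⟨_, hx, hxη, _, hup⟩ => div_le_of_mul_le_cube_div hθ hx hxη hup
  · filter_upwards [hev] with c ⟨hc, hx, hxη, _⟩
    have : 0 < η ^ 2 - ξ c ^ 2 := by nlinarith
    positivity
  · exact hev.mono fun c ⟨_, hx, hxη, _, hup⟩ => mul_deriv_le_of_mul_le_cube_div hx hxη hup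
end

section
/- As c → +∞ one has: ξ(c) → η and c·(η − ξ(c)) → 0. -/
open Real Filter Set

/-! Solving `F_c(ξ) = 0` for the logarithm gives `(η + ξ)/(η - ξ) = exp((2ξ + θc)/η) ≥ exp(θc/η)`,
so the gap `η - ξ(c)` is at most `2η·exp(-θc/η)`: it decays exponentially in `c`, which beats
the linear factor `c`. -/

lemma sub_le_two_mul_exp_of_log_eq {η x a : ℝ} (hx₀ : 0 ≤ x) (hxη : x < η)
    (h : 2 * x + a - η * log ((η + x) / (η - x)) = 0) :
    η - x ≤ 2 * η * exp (-a / η) := by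
  have hη : 0 < η := hx₀.trans_lt hxη
  have hgap : 0 < η - x := sub_pos.mpr hxη
  have hlog : a / η ≤ log ((η + x) / (η - x)) := by
    rw [div_le_iff₀ hη]
    linarith
  have hexp : exp (a / η) * (η - x) ≤ η + x :=
    (le_div_iff₀ hgap).mp ((le_log_iff_exp_le (by positivity)).mp hlog)
  rw [neg_div, exp_neg, ← div_eq_mul_inv, le_div_iff₀ (exp_pos _)]
  linarith

/-- Limits as `c → +∞` of the unique zero `ξ(c)` of
`F_c(x) = 2x + θc − η log((η+x)/(η−x))` in `(0, η)`:
`ξ(c) → η` and `c·(η − ξ(c)) → 0`. -/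
theorem stmt_4 (η θ : ℝ) (hη : 0 < η) (hθ : 0 < θ) (ξ : ℝ → ℝ)
    (hξ : ∀ c : ℝ, 0 < c → ξ c ∈ Set.Ioo 0 η ∧
      2 * ξ c + θ * c - η * Real.log ((η + ξ c) / (η - ξ c)) = 0) :
    Filter.Tendsto ξ Filter.atTop (nhds η) ∧
    Filter.Tendsto (fun c => c * (η - ξ c)) Filter.atTop (nhds 0) := by
  have hbounds : ∀ᶠ c in atTop, 0 ≤ η - ξ c ∧ η - ξ c ≤ 2 * η * exp (-(θ / η) * c) := by
    filter_upwards [eventually_gt_atTop 0] with c hc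
    obtain ⟨⟨hξ₀, hξη⟩, hroot⟩ := hξ c hc
    have hexp : -(θ * c) / η = -(θ / η) * c := by ring
    exact ⟨by linarith, hexp ▸ sub_le_two_mul_exp_of_log_eq hξ₀.le hξη hroot⟩
  have hdecay : Tendsto (fun c : ℝ => c * exp (-(θ / η) * c)) atTop (nhds 0) := by
    simpa only [rpow_one] using tendsto_rpow_mul_exp_neg_mul_atTop_nhds_zero 1 _ (div_pos hθ hη)
  have hupper : Tendsto (fun c => 2 * η * (c * exp (-(θ / η) * c))) atTop (nhds 0) := by
    simpa using hdecay.const_mul (2 * η)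
  have hscaled : Tendsto (fun c => c * (η - ξ c)) atTop (nhds 0) := by
    refine tendsto_of_tendsto_of_tendsto_of_le_of_le' tendsto_const_nhds hupper ?_ ?_
    · filter_upwards [eventually_gt_atTop 0, hbounds] with c hc h using mul_nonneg hc.le h.1
    · filter_upwards [eventually_gt_atTop 0, hbounds] with c hc h
      nlinarith
  have hgap : Tendsto (fun c => η - ξ c) atTop (nhds 0) := by
    refine tendsto_of_tendsto_of_tendsto_of_le_of_le' tendsto_const_nhds hscaled
      (hbounds.mono fun _ h => h.1) ?_
    filter_upwards [eventually_ge_atTop 1, hbounds] with c hc h using le_mul_of_one_le_left h.1 hc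
  exact ⟨by simpa using hgap.const_sub η, hscaled⟩
end

section
/- Suppose the 8-tuple (A₁₁, A₁₂, A₂₁, A₂₂, x̄₁, x̄₂, x₁*, x₂*) satisfies the symmetry relations x̄₁ = 2s̃ − x̄₂, x₁* = 2s̃ − x₂*, A₁₁ = A₂₂·e^{−2θs̃}, A₁₂ = A₂₁·e^{2θs̃}. Then φ₁(x) = φ₂(2s̃ − x) for every x ∈ ℝ, and the player-1 equations (φ₁′(x₁*) = λ, φ₁″(x₁*) ≤ 0, φ₁′(x̄₁) = λ, φ₁(x̄₁) = φ₁(x₁*) − c − λ(x₁* − x̄₁), φ₁(x̄₂) = φ₁(x₂*) + c̃ + λ̃(x̄₂ − x₂*)) hold if and only if the player-2 equations (φ₂′(x₂*) = −λ, φ₂″(x₂*) ≤ 0, φ₂′(x̄₂) = −λ, φ₂(x̄₁) = φ₂(x₁*) + c̃ + λ̃(x₁* − x̄₁), φ₂(x̄₂) = φ₂(x₂*) − c − λ(x̄₂ − x₂*)) hold. -/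
open Real Filter Set

/-- `φ₁(x) = A₁₁ e^{θx} + A₁₂ e^{−θx} + (x − s₁)/ρ`. -/
noncomputable def phi1 (ρ θ s1 A11 A12 : ℝ) : ℝ → ℝ :=
  fun x => A11 * Real.exp (θ * x) + A12 * Real.exp (-(θ * x)) + (x - s1) / ρ

/-- `φ₂(x) = A₂₁ e^{θx} + A₂₂ e^{−θx} + (s₂ − x)/ρ`. -/
noncomputable def phi2 (ρ θ s2 A21 A22 : ℝ) : ℝ → ℝ :=
  fun x => A21 * Real.exp (θ * x) + A22 * Real.exp (-(θ * x)) + (s2 - x) / ρ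

/-!
The symmetry relations say exactly that `φ₁ = φ₂ ∘ (2s̃ − ·)`. Reflection negates first
derivatives, preserves second derivatives, swaps `x̄₁ ↔ x̄₂` and `x₁* ↔ x₂*`, and preserves the
distance `x₁* − x̄₁ = x̄₂ − x₂*`; so each player-1 equation becomes a player-2 equation.
-/

lemma phi1_eq_phi2_comp_const_sub {ρ θ s1 s2 a : ℝ} (A21 A22 : ℝ) (ha : s1 + s2 = a) :
    phi1 ρ θ s1 (A22 * Real.exp (-(θ * a))) (A21 * Real.exp (θ * a))
      = fun x => phi2 ρ θ s2 A21 A22 (a - x) := by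
  funext x
  have hexp_pos : Real.exp (θ * (a - x)) = Real.exp (θ * a) * Real.exp (-(θ * x)) := by
    rw [← Real.exp_add]; ring_nf
  have hexp_neg : Real.exp (-(θ * (a - x))) = Real.exp (-(θ * a)) * Real.exp (θ * x) := by
    rw [← Real.exp_add]; ring_nf
  simp only [phi1, phi2, hexp_pos, hexp_neg]
  subst ha
  ring

lemma deriv_deriv_comp_const_sub {𝕜 F : Type*} [NontriviallyNormedField 𝕜]
    [NormedAddCommGroup F] [NormedSpace 𝕜 F] (f : 𝕜 → F) (a x : 𝕜) :
    deriv (deriv fun y => f (a - y)) x = deriv (deriv f) (a - x) := by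
  have hderiv : (deriv fun y => f (a - y)) = fun y => -deriv f (a - y) :=
    funext fun _ => deriv_comp_const_sub ..
  rw [hderiv, deriv.fun_neg, deriv_comp_const_sub, neg_neg]

lemma player_one_iff_player_two_comp_const_sub (g : ℝ → ℝ)
    {a lam lamt c ct xb1 xb2 xs1 xs2 : ℝ} (hxb : xb1 = a - xb2) (hxs : xs1 = a - xs2) :
    (deriv (fun x => g (a - x)) xs1 = lam ∧
      deriv (deriv fun x => g (a - x)) xs1 ≤ 0 ∧
      deriv (fun x => g (a - x)) xb1 = lam ∧
      g (a - xb1) = g (a - xs1) - c - lam * (xs1 - xb1) ∧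
      g (a - xb2) = g (a - xs2) + ct + lamt * (xb2 - xs2))
      ↔
     (deriv g xs2 = -lam ∧
      deriv (deriv g) xs2 ≤ 0 ∧
      deriv g xb2 = -lam ∧
      g xb1 = g xs1 + ct + lamt * (xs1 - xb1) ∧
      g xb2 = g xs2 - c - lam * (xb2 - xs2)) := by
  have hxb' : a - xb1 = xb2 := by rw [hxb]; ring
  have hxs' : a - xs1 = xs2 := by rw [hxs]; ring
  have hgap : xs1 - xb1 = xb2 - xs2 := by rw [hxb, hxs]; ring
  simp only [deriv_comp_const_sub, deriv_deriv_comp_const_sub, hxb', hxs', ← hxb, ← hxs, hgap,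
    neg_eq_iff_eq_neg]
  constructor
  · rintro ⟨hs, hss, hb, hb1, hb2⟩
    exact ⟨hs, hss, hb, by linarith, by linarith⟩
  · rintro ⟨hs, hss, hb, hb1, hb2⟩
    exact ⟨hs, hss, hb, by linarith, by linarith⟩

theorem stmt_7_general (ρ lam lamt c ct s1 s2 : ℝ)
    (θ st : ℝ) (hst : st = (s1 + s2) / 2)
    (A11 A12 A21 A22 xb1 xb2 xs1 xs2 : ℝ)
    (hsym1 : xb1 = 2 * st - xb2) (hsym2 : xs1 = 2 * st - xs2)
    (hsym3 : A11 = A22 * Real.exp (-(2 * θ * st)))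
    (hsym4 : A12 = A21 * Real.exp (2 * θ * st)) :
    (∀ x : ℝ, phi1 ρ θ s1 A11 A12 x = phi2 ρ θ s2 A21 A22 (2 * st - x)) ∧
    ((deriv (phi1 ρ θ s1 A11 A12) xs1 = lam ∧
      deriv (deriv (phi1 ρ θ s1 A11 A12)) xs1 ≤ 0 ∧
      deriv (phi1 ρ θ s1 A11 A12) xb1 = lam ∧
      phi1 ρ θ s1 A11 A12 xb1
        = phi1 ρ θ s1 A11 A12 xs1 - c - lam * (xs1 - xb1) ∧
      phi1 ρ θ s1 A11 A12 xb2
        = phi1 ρ θ s1 A11 A12 xs2 + ct + lamt * (xb2 - xs2))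
      ↔
     (deriv (phi2 ρ θ s2 A21 A22) xs2 = -lam ∧
      deriv (deriv (phi2 ρ θ s2 A21 A22)) xs2 ≤ 0 ∧
      deriv (phi2 ρ θ s2 A21 A22) xb2 = -lam ∧
      phi2 ρ θ s2 A21 A22 xb1
        = phi2 ρ θ s2 A21 A22 xs1 + ct + lamt * (xs1 - xb1) ∧
      phi2 ρ θ s2 A21 A22 xb2
        = phi2 ρ θ s2 A21 A22 xs2 - c - lam * (xb2 - xs2))) := by
  have hreflect : phi1 ρ θ s1 A11 A12 = fun x => phi2 ρ θ s2 A21 A22 (2 * st - x) := by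
    rw [hsym3, hsym4, show 2 * θ * st = θ * (2 * st) by ring]
    exact phi1_eq_phi2_comp_const_sub A21 A22 (by rw [hst]; ring)
  rw [hreflect]
  exact ⟨fun _ => rfl, player_one_iff_player_two_comp_const_sub _ hsym1 hsym2⟩

/-- Under the symmetry relations, `φ₁(x) = φ₂(2s̃ − x)` and the player-1
equations hold iff the player-2 equations hold. -/
theorem stmt_7 (ρ σ lam lamt c ct s1 s2 : ℝ) (hρ : 0 < ρ) (hσ : 0 < σ)
    (h1 : 0 < 1 - lam * ρ) (h2 : lamt ≤ lam) (h3 : 0 ≤ lamt)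
    (h4 : ct ≤ c) (h5 : 0 ≤ ct) (h6 : 0 < c)
    (h7 : (c, lam) ≠ (ct, lamt)) (h8 : s1 < s2)
    (θ st : ℝ) (hθ : θ = Real.sqrt (2 * ρ / σ ^ 2)) (hst : st = (s1 + s2) / 2)
    (A11 A12 A21 A22 xb1 xb2 xs1 xs2 : ℝ)
    (hsym1 : xb1 = 2 * st - xb2) (hsym2 : xs1 = 2 * st - xs2)
    (hsym3 : A11 = A22 * Real.exp (-(2 * θ * st)))
    (hsym4 : A12 = A21 * Real.exp (2 * θ * st)) :
    (∀ x : ℝ, phi1 ρ θ s1 A11 A12 x = phi2 ρ θ s2 A21 A22 (2 * st - x)) ∧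
    ((deriv (phi1 ρ θ s1 A11 A12) xs1 = lam ∧
      deriv (deriv (phi1 ρ θ s1 A11 A12)) xs1 ≤ 0 ∧
      deriv (phi1 ρ θ s1 A11 A12) xb1 = lam ∧
      phi1 ρ θ s1 A11 A12 xb1
        = phi1 ρ θ s1 A11 A12 xs1 - c - lam * (xs1 - xb1) ∧
      phi1 ρ θ s1 A11 A12 xb2
        = phi1 ρ θ s1 A11 A12 xs2 + ct + lamt * (xb2 - xs2))
      ↔
     (deriv (phi2 ρ θ s2 A21 A22) xs2 = -lam ∧
      deriv (deriv (phi2 ρ θ s2 A21 A22)) xs2 ≤ 0 ∧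
      deriv (phi2 ρ θ s2 A21 A22) xb2 = -lam ∧
      phi2 ρ θ s2 A21 A22 xb1
        = phi2 ρ θ s2 A21 A22 xs1 + ct + lamt * (xs1 - xb1) ∧
      phi2 ρ θ s2 A21 A22 xb2
        = phi2 ρ θ s2 A21 A22 xs2 - c - lam * (xb2 - xs2))) :=
  stmt_7_general ρ lam lamt c ct s1 s2 θ st hst A11 A12 A21 A22 xb1 xb2 xs1 xs2 hsym1 hsym2 hsym3
    hsym4
end

section
/- Assume c̃ = 0 and λ = λ̃. Then, as c → 0⁺: x̄₁(c) → s̃, x̄₂(c) → s̃, x₁*(c) → s̃, x₂*(c) → s̃, A₂₁(c) → e^{−θs̃}·η/(2θ), and A₂₂(c) → −e^{θs̃}·η/(2θ). -/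
/-!
With `c̃ = 0` and `λ = λ̃` one has `Γ(c) = θc / (4ξ(c))`, and the equation `F_c(ξ) = 0` says
`G(ξ(c)) = θc` for `G(x) = η log((η + x)/(η - x)) - 2x`. Since `G(0) = G'(0) = 0` and
`G' > 0` on `(0, η)`, `ξ(c) → 0` as `c → 0⁺`, and then `Γ(c) = G(ξ)/(4ξ) → G'(0)/4 = 0`.
All six quantities are continuous in `(ξ, Γ)` near `(0, 0)`, which gives the limits.
-/

open Real Filter Set Topology

theorem tendsto_nhdsGT_of_strictMonoOn_of_tendsto_comp {α β γ : Type*} [LinearOrder β]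
    [TopologicalSpace β] [OrderTopology β] [LinearOrder γ] [TopologicalSpace γ]
    [OrderTopology γ] {l : Filter α} {f : α → β} {G : β → γ} {a b : β}
    (hG : StrictMonoOn G (Ico a b)) (hf : ∀ᶠ x in l, f x ∈ Ioo a b)
    (hGf : Tendsto (G ∘ f) l (𝓝 (G a))) : Tendsto f l (𝓝[>] a) := by
  refine tendsto_nhdsWithin_iff.2 ⟨tendsto_order.2 ⟨fun a' ha' => ?_, fun b' hb' => ?_⟩,
    hf.mono fun x hx => hx.1⟩
  · exact hf.mono fun x hx => ha'.trans hx.1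
  rcases le_or_gt b b' with hbb' | hb'b
  · exact hf.mono fun x hx => hx.2.trans_le hbb'
  have hGb' : G a < G b' := hG (left_mem_Ico.2 (hb'.trans hb'b)) ⟨hb'.le, hb'b⟩ hb'
  filter_upwards [hf, (tendsto_order.1 hGf).2 _ hGb'] with x hx hGx
  exact (hG.lt_iff_lt ⟨hx.1.le, hx.2⟩ ⟨hb'.le, hb'b⟩).1 hGx

/-- The equation `F_c(ξ) = 0` reads `logRatioExcess η ξ = θ c`. -/
noncomputable def logRatioExcess (η x : ℝ) : ℝ := η * log ((η + x) / (η - x)) - 2 * x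

section logRatioExcess

variable {η : ℝ}

@[simp]
theorem logRatioExcess_zero (η : ℝ) : logRatioExcess η 0 = 0 := by
  by_cases hη : η = 0 <;> simp [logRatioExcess, hη]

theorem hasDerivAt_logRatioExcess {x : ℝ} (hx₁ : -η < x) (hx₂ : x < η) :
    HasDerivAt (logRatioExcess η) (2 * x ^ 2 / ((η + x) * (η - x))) x := by
  have hp : 0 < η + x := by linarith
  have hm : 0 < η - x := by linarith
  have hq : HasDerivAt (fun y => (η + y) / (η - y)) (2 * η / (η - x) ^ 2) x :=
    (((hasDerivAt_id x).const_add η).div ((hasDerivAt_id x).const_sub η) hm.ne').congr_deriv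
      (by simp only [id]; ring)
  have hlin : HasDerivAt (fun y => 2 * y) 2 x := by
    simpa using (hasDerivAt_id x).const_mul 2
  refine (((hq.log (div_pos hp hm).ne').const_mul η).sub hlin).congr_deriv ?_
  field_simp
  ring

theorem strictMonoOn_logRatioExcess : StrictMonoOn (logRatioExcess η) (Ico 0 η) := by
  have hderiv : ∀ x ∈ Ico 0 η, HasDerivAt (logRatioExcess η) _ x := fun x hx =>
    hasDerivAt_logRatioExcess (by linarith [hx.1, hx.2]) hx.2
  refine strictMonoOn_of_deriv_pos (convex_Ico 0 η)
    (fun x hx => (hderiv x hx).continuousAt.continuousWithinAt) fun x hx => ?_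
  rw [interior_Ico] at hx
  rw [(hderiv x (Ioo_subset_Ico_self hx)).deriv]
  obtain ⟨hx₀, hxη⟩ := hx
  have hp : 0 < η + x := by linarith
  have hm : 0 < η - x := by linarith
  positivity

theorem tendsto_inv_mul_logRatioExcess (hη : 0 < η) :
    Tendsto (fun x => x⁻¹ * logRatioExcess η x) (𝓝[≠] 0) (𝓝 0) := by
  have h := hasDerivAt_iff_tendsto_slope_zero.1 (hasDerivAt_logRatioExcess (neg_lt_zero.2 hη) hη)
  simpa using h

end logRatioExcess

theorem tendsto_log_sqrt_mul_sqrt_add_one_add_sqrt {α : Type*} {l : Filter α} {q Γ : α → ℝ}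
    (hq : Tendsto q l (𝓝 1)) (hΓ : Tendsto Γ l (𝓝 0)) :
    Tendsto (fun c => log (√(q c) * (√(Γ c + 1) + √(Γ c)))) l (𝓝 0) := by
  simpa using (hq.sqrt.mul ((hΓ.add_const 1).sqrt.add hΓ.sqrt)).log (by simp)

theorem tendsto_root_logRatioExcess {η θ : ℝ} {ξ : ℝ → ℝ}
    (hξ : ∀ c, 0 < c → ξ c ∈ Ioo 0 η ∧ logRatioExcess η (ξ c) = θ * c) :
    Tendsto ξ (𝓝[>] 0) (𝓝[>] 0) := by
  refine tendsto_nhdsGT_of_strictMonoOn_of_tendsto_comp strictMonoOn_logRatioExcess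
    (eventually_nhdsWithin_of_forall fun c hc => (hξ c hc).1) ?_
  have hθc : Tendsto (fun c => θ * c) (𝓝[>] 0) (𝓝 0) :=
    tendsto_nhdsWithin_of_tendsto_nhds ((continuous_const_mul θ).tendsto' 0 0 (mul_zero θ))
  rw [logRatioExcess_zero]
  exact hθc.congr' (eventually_nhdsWithin_of_forall fun c hc => (hξ c hc).2.symm)

theorem tendsto_div_root_logRatioExcess {η θ : ℝ} {ξ : ℝ → ℝ} (hη : 0 < η)
    (hξ : ∀ c, 0 < c → ξ c ∈ Ioo 0 η ∧ logRatioExcess η (ξ c) = θ * c) :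
    Tendsto (fun c => θ * c / (4 * ξ c)) (𝓝[>] 0) (𝓝 0) := by
  have h := ((tendsto_inv_mul_logRatioExcess hη).comp (tendsto_nhdsWithin_mono_right
    (fun x hx => ne_of_gt hx) (tendsto_root_logRatioExcess hξ))).div_const 4
  rw [zero_div] at h
  refine h.congr' (eventually_nhdsWithin_of_forall fun c hc => ?_)
  rw [Function.comp_apply, (hξ c hc).2]
  ring

theorem stmt_12_general
    (lam lamt ct : ℝ)
    (θ η st : ℝ)
    (ξ : ℝ → ℝ)
    (hξ : ∀ c : ℝ, 0 < c → ξ c ∈ Set.Ioo 0 η ∧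
      2 * ξ c + θ * c - η * Real.log ((η + ξ c) / (η - ξ c)) = 0)
    (Γ : ℝ → ℝ)
    (hΓ : ∀ c : ℝ, Γ c = θ * (c - ct) / (4 * ξ c)
      + θ * c * (lam - lamt) / (4 * η * ξ c) + (lam - lamt) / (2 * η))
    (xb1 xb2 xs1 xs2 : ℝ → ℝ)
    (hxb1 : ∀ c : ℝ, xb1 c = st - (1 / θ) * Real.log
      (Real.sqrt ((η + ξ c) / (η - ξ c)) * (Real.sqrt (Γ c + 1) + Real.sqrt (Γ c))))
    (hxb2 : ∀ c : ℝ, xb2 c = st + (1 / θ) * Real.log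
      (Real.sqrt ((η + ξ c) / (η - ξ c)) * (Real.sqrt (Γ c + 1) + Real.sqrt (Γ c))))
    (hxs1 : ∀ c : ℝ, xs1 c = st - (1 / θ) * Real.log
      (Real.sqrt ((η - ξ c) / (η + ξ c)) * (Real.sqrt (Γ c + 1) + Real.sqrt (Γ c))))
    (hxs2 : ∀ c : ℝ, xs2 c = st + (1 / θ) * Real.log
      (Real.sqrt ((η - ξ c) / (η + ξ c)) * (Real.sqrt (Γ c + 1) + Real.sqrt (Γ c))))
    (A21 A22 : ℝ → ℝ)
    (hA21 : ∀ c : ℝ, A21 c = Real.exp (-(θ * st))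
      * (Real.sqrt (η ^ 2 - (ξ c) ^ 2) / (2 * θ))
      * (Real.sqrt (Γ c + 1) - Real.sqrt (Γ c)))
    (hA22 : ∀ c : ℝ, A22 c = Real.exp (θ * st)
      * (Real.sqrt (η ^ 2 - (ξ c) ^ 2) / (2 * θ))
      * (-Real.sqrt (Γ c + 1) - Real.sqrt (Γ c)))
    (hct0 : ct = 0) (hll : lam = lamt) :
    Filter.Tendsto xb1 (nhdsWithin 0 (Set.Ioi 0)) (nhds st) ∧
    Filter.Tendsto xb2 (nhdsWithin 0 (Set.Ioi 0)) (nhds st) ∧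
    Filter.Tendsto xs1 (nhdsWithin 0 (Set.Ioi 0)) (nhds st) ∧
    Filter.Tendsto xs2 (nhdsWithin 0 (Set.Ioi 0)) (nhds st) ∧
    Filter.Tendsto A21 (nhdsWithin 0 (Set.Ioi 0))
      (nhds (Real.exp (-(θ * st)) * η / (2 * θ))) ∧
    Filter.Tendsto A22 (nhdsWithin 0 (Set.Ioi 0))
      (nhds (-(Real.exp (θ * st) * η / (2 * θ)))) := by
  subst hct0 hll
  obtain rfl : xb1 = _ := funext hxb1
  obtain rfl : xb2 = _ := funext hxb2
  obtain rfl : xs1 = _ := funext hxs1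
  obtain rfl : xs2 = _ := funext hxs2
  obtain rfl : A21 = _ := funext hA21
  obtain rfl : A22 = _ := funext hA22
  have hη : 0 < η := (hξ 1 one_pos).1.1.trans (hξ 1 one_pos).1.2
  have hroot : ∀ c, 0 < c → ξ c ∈ Ioo 0 η ∧ logRatioExcess η (ξ c) = θ * c := fun c hc =>
    ⟨(hξ c hc).1, by rw [logRatioExcess]; linarith [(hξ c hc).2]⟩
  have hΓ0 : Tendsto Γ (𝓝[>] 0) (𝓝 0) := by
    refine (tendsto_div_root_logRatioExcess hη hroot).congr fun c => ?_
    rw [hΓ]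
    ring
  have hξ0' : Tendsto ξ (𝓝[>] 0) (𝓝 0) :=
    tendsto_nhdsWithin_iff.1 (tendsto_root_logRatioExcess hroot) |>.1
  have hplus : Tendsto (fun c => (η + ξ c) / (η - ξ c)) (𝓝[>] 0) (𝓝 1) := by
    have h := ((tendsto_const_nhds (x := η)).add hξ0').div (tendsto_const_nhds.sub hξ0')
      (by simpa using hη.ne')
    rwa [add_zero, sub_zero, div_self hη.ne'] at h
  have hminus : Tendsto (fun c => (η - ξ c) / (η + ξ c)) (𝓝[>] 0) (𝓝 1) := by
    simpa using hplus.inv₀ one_ne_zero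
  have hlogp := tendsto_log_sqrt_mul_sqrt_add_one_add_sqrt hplus hΓ0
  have hlogm := tendsto_log_sqrt_mul_sqrt_add_one_add_sqrt hminus hΓ0
  have hsqrt : Tendsto (fun c => √(η ^ 2 - ξ c ^ 2)) (𝓝[>] 0) (𝓝 η) := by
    have h := ((tendsto_const_nhds (x := η ^ 2)).sub (hξ0'.pow 2)).sqrt
    rwa [zero_pow two_ne_zero, sub_zero, Real.sqrt_sq hη.le] at h
  have hΓp := (hΓ0.add_const 1).sqrt
  have hΓs := hΓ0.sqrt
  refine ⟨?_, ?_, ?_, ?_, ?_, ?_⟩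
  · simpa using tendsto_const_nhds.sub (hlogp.const_mul (1 / θ))
  · simpa using tendsto_const_nhds.add (hlogp.const_mul (1 / θ))
  · simpa using tendsto_const_nhds.sub (hlogm.const_mul (1 / θ))
  · simpa using tendsto_const_nhds.add (hlogm.const_mul (1 / θ))
  · convert (tendsto_const_nhds.mul (hsqrt.div_const (2 * θ))).mul (hΓp.sub hΓs) using 2
    simp [mul_div_assoc]
  · convert (tendsto_const_nhds.mul (hsqrt.div_const (2 * θ))).mul (hΓp.neg.sub hΓs) using 2
    simp [mul_div_assoc]

/-- Limits as c → 0⁺ of the explicit Nash-equilibrium parameters in the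
case c̃ = 0, λ = λ̃. -/
theorem stmt_12
    (ρ σ lam lamt ct s1 s2 : ℝ) (hρ : 0 < ρ) (hσ : 0 < σ)
    (h1 : 0 < 1 - lam * ρ) (h2 : lamt ≤ lam) (h3 : 0 ≤ lamt)
    (h5 : 0 ≤ ct) (h8 : s1 < s2)
    (θ η st : ℝ) (hθ : θ = Real.sqrt (2 * ρ / σ ^ 2))
    (hη : η = (1 - lam * ρ) / ρ) (hst : st = (s1 + s2) / 2)
    (ξ : ℝ → ℝ)
    (hξ : ∀ c : ℝ, 0 < c → ξ c ∈ Set.Ioo 0 η ∧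
      2 * ξ c + θ * c - η * Real.log ((η + ξ c) / (η - ξ c)) = 0)
    (Γ : ℝ → ℝ)
    (hΓ : ∀ c : ℝ, Γ c = θ * (c - ct) / (4 * ξ c)
      + θ * c * (lam - lamt) / (4 * η * ξ c) + (lam - lamt) / (2 * η))
    (xb1 xb2 xs1 xs2 : ℝ → ℝ)
    (hxb1 : ∀ c : ℝ, xb1 c = st - (1 / θ) * Real.log
      (Real.sqrt ((η + ξ c) / (η - ξ c)) * (Real.sqrt (Γ c + 1) + Real.sqrt (Γ c))))
    (hxb2 : ∀ c : ℝ, xb2 c = st + (1 / θ) * Real.log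
      (Real.sqrt ((η + ξ c) / (η - ξ c)) * (Real.sqrt (Γ c + 1) + Real.sqrt (Γ c))))
    (hxs1 : ∀ c : ℝ, xs1 c = st - (1 / θ) * Real.log
      (Real.sqrt ((η - ξ c) / (η + ξ c)) * (Real.sqrt (Γ c + 1) + Real.sqrt (Γ c))))
    (hxs2 : ∀ c : ℝ, xs2 c = st + (1 / θ) * Real.log
      (Real.sqrt ((η - ξ c) / (η + ξ c)) * (Real.sqrt (Γ c + 1) + Real.sqrt (Γ c))))
    (A21 A22 : ℝ → ℝ)
    (hA21 : ∀ c : ℝ, A21 c = Real.exp (-(θ * st))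
      * (Real.sqrt (η ^ 2 - (ξ c) ^ 2) / (2 * θ))
      * (Real.sqrt (Γ c + 1) - Real.sqrt (Γ c)))
    (hA22 : ∀ c : ℝ, A22 c = Real.exp (θ * st)
      * (Real.sqrt (η ^ 2 - (ξ c) ^ 2) / (2 * θ))
      * (-Real.sqrt (Γ c + 1) - Real.sqrt (Γ c)))
    (hct0 : ct = 0) (hll : lam = lamt) :
    Filter.Tendsto xb1 (nhdsWithin 0 (Set.Ioi 0)) (nhds st) ∧
    Filter.Tendsto xb2 (nhdsWithin 0 (Set.Ioi 0)) (nhds st) ∧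
    Filter.Tendsto xs1 (nhdsWithin 0 (Set.Ioi 0)) (nhds st) ∧
    Filter.Tendsto xs2 (nhdsWithin 0 (Set.Ioi 0)) (nhds st) ∧
    Filter.Tendsto A21 (nhdsWithin 0 (Set.Ioi 0))
      (nhds (Real.exp (-(θ * st)) * η / (2 * θ))) ∧
    Filter.Tendsto A22 (nhdsWithin 0 (Set.Ioi 0))
      (nhds (-(Real.exp (θ * st) * η / (2 * θ)))) :=
  stmt_12_general lam lamt ct θ η st ξ hξ Γ hΓ xb1 xb2 xs1 xs2 hxb1 hxb2 hxs1 hxs2 A21 A22 hA21 hA22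
    hct0 hll
end

section
/- As c → +∞: x̄₂(c) → +∞, x̄₁(c) → −∞, x₁*(c) → +∞, x₂*(c) → −∞, A₂₁(c) → 0, and A₂₂(c) → 0. -/
/-!
The defining equation of `ξ c` says `(η - ξ c) / (η + ξ c) = exp (-(2 ξ c + θ c) / η)`, which
is at most `exp (-θ c / η)`. So `ξ c → η`, and with it `Γ c / c` tends to a positive constant.
Consequently `√((η + ξ) / (η - ξ)) (√(Γ + 1) + √Γ) → ∞`, while
`√((η - ξ) / (η + ξ)) (√(Γ + 1) + √Γ)` tends to `0⁺` because exponential decay beats linear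
growth; taking logarithms gives the four thresholds. For the coefficients,
`√(η² - ξ²) = (η + ξ) √((η - ξ) / (η + ξ))` and `√(Γ + 1) - √Γ = (√(Γ + 1) + √Γ)⁻¹`.
-/

open Real Filter Set Topology

lemma ratio_le_exp_of_eq_log {θ η x c : ℝ} (hx : x ∈ Ioo 0 η)
    (h : 2 * x + θ * c - η * log ((η + x) / (η - x)) = 0) :
    (η - x) / (η + x) ≤ exp (-(θ / η) * c) := by
  obtain ⟨hx0, hxη⟩ := hx
  have hη : 0 < η := hx0.trans hxη
  have hlog : log ((η + x) / (η - x)) = (2 * x + θ * c) / η := by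
    field_simp
    linarith
  rw [← inv_div, ← exp_log (div_pos (by linarith) (by linarith) : 0 < (η + x) / (η - x)),
    ← exp_neg, hlog, exp_le_exp, neg_mul, neg_le_neg_iff, div_mul_eq_mul_div]
  gcongr
  linarith

section

variable {θ η : ℝ} {ξ : ℝ → ℝ}

lemma tendsto_mul_ratio_nhds_zero (hθ : 0 < θ)
    (hξ : ∀ c : ℝ, 0 < c → ξ c ∈ Ioo 0 η ∧
      2 * ξ c + θ * c - η * log ((η + ξ c) / (η - ξ c)) = 0) :
    Tendsto (fun c => c * ((η - ξ c) / (η + ξ c))) atTop (𝓝 0) := by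
  have hη : 0 < η := (hξ 1 one_pos).1.1.trans (hξ 1 one_pos).1.2
  have hexp : Tendsto (fun c : ℝ => c * exp (-(θ / η) * c)) atTop (𝓝 0) := by
    simpa using tendsto_rpow_mul_exp_neg_mul_atTop_nhds_zero 1 (θ / η) (by positivity)
  refine squeeze_zero' ?_ ?_ hexp
  · filter_upwards [eventually_gt_atTop 0] with c hc
    obtain ⟨⟨h0, hξη⟩, -⟩ := hξ c hc
    exact mul_nonneg hc.le (div_nonneg (by linarith) (by linarith))
  · filter_upwards [eventually_gt_atTop 0] with c hc
    exact mul_le_mul_of_nonneg_left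
      (ratio_le_exp_of_eq_log (hξ c hc).1 (hξ c hc).2) hc.le

lemma tendsto_ratio_nhdsGT_zero (hθ : 0 < θ)
    (hξ : ∀ c : ℝ, 0 < c → ξ c ∈ Ioo 0 η ∧
      2 * ξ c + θ * c - η * log ((η + ξ c) / (η - ξ c)) = 0) :
    Tendsto (fun c => (η - ξ c) / (η + ξ c)) atTop (𝓝[>] 0) := by
  refine tendsto_nhdsWithin_iff.2 ⟨?_, ?_⟩
  · have := (tendsto_mul_ratio_nhds_zero hθ hξ).mul tendsto_inv_atTop_zero
    rw [mul_zero] at this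
    refine this.congr' ?_
    filter_upwards [eventually_gt_atTop 0] with c hc
    field_simp
  · filter_upwards [eventually_gt_atTop 0] with c hc
    obtain ⟨⟨h0, hξη⟩, -⟩ := hξ c hc
    exact div_pos (sub_pos.2 hξη) (by linarith)

lemma tendsto_of_ratio_nhdsGT_zero
    (hξ : ∀ᶠ c in atTop, 0 < ξ c) (hη : 0 < η)
    (hr : Tendsto (fun c => (η - ξ c) / (η + ξ c)) atTop (𝓝[>] 0)) :
    Tendsto ξ atTop (𝓝 η) := by
  have hr' := hr.mono_right nhdsWithin_le_nhds
  have hcont : Tendsto (fun r : ℝ => η * (1 - r) / (1 + r)) (𝓝 0) (𝓝 η) := by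
    convert (show ContinuousAt (fun r : ℝ => η * (1 - r) / (1 + r)) 0 by
      fun_prop (disch := norm_num)).tendsto
    norm_num
  refine (hcont.comp hr').congr' ?_
  filter_upwards [hξ] with c hc
  have : η + ξ c ≠ 0 := by linarith
  rw [Function.comp_apply]
  field_simp [hη.ne']
  ring

end

lemma tendsto_gamma_div_self {θ η ct l l' : ℝ} {ξ Γ : ℝ → ℝ} (hξ : Tendsto ξ atTop (𝓝 η))
    (hη : η ≠ 0)
    (hΓ : ∀ c : ℝ, Γ c = θ * (c - ct) / (4 * ξ c)
      + θ * c * (l - l') / (4 * η * ξ c) + (l - l') / (2 * η)) :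
    Tendsto (fun c => Γ c / c) atTop (𝓝 (θ / (4 * η) + θ * (l - l') / (4 * η * η))) := by
  have hinv := hξ.inv₀ hη
  have hcinv : Tendsto (fun c : ℝ => c⁻¹) atTop (𝓝 0) := tendsto_inv_atTop_zero
  have := ((hinv.const_mul (θ / 4)).mul ((hcinv.const_mul ct).const_sub 1)).add
    ((hinv.const_mul (θ * (l - l') / (4 * η))).add (hcinv.const_mul ((l - l') / (2 * η))))
  convert this.congr' ?_ using 2
  · field_simp
    ring
  filter_upwards [eventually_gt_atTop 0, hξ.eventually_ne hη] with c hc hξc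
  rw [hΓ]
  field_simp
  ring

lemma sqrt_add_one_sub_sqrt {g : ℝ} (hg : 0 ≤ g) : √(g + 1) - √g = (√(g + 1) + √g)⁻¹ := by
  refine eq_inv_of_mul_eq_one_left ?_
  rw [mul_comm, ← sq_sub_sq, sq_sqrt (by linarith), sq_sqrt hg]
  ring

section

variable {α : Type*} {l : Filter α} {Γ : α → ℝ}

lemma tendsto_sqrt_add_one_add_sqrt_atTop (hΓ : Tendsto Γ l atTop) :
    Tendsto (fun c => √(Γ c + 1) + √(Γ c)) l atTop :=
  (tendsto_sqrt_atTop.comp (tendsto_atTop_add_const_right _ 1 hΓ)).atTop_add_atTop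
    (tendsto_sqrt_atTop.comp hΓ)

lemma tendsto_sqrt_add_one_sub_sqrt_nhds_zero (hΓ : Tendsto Γ l atTop) :
    Tendsto (fun c => √(Γ c + 1) - √(Γ c)) l (𝓝 0) :=
  (tendsto_inv_atTop_zero.comp (tendsto_sqrt_add_one_add_sqrt_atTop hΓ)).congr' <|
    (hΓ.eventually_ge_atTop 0).mono fun _ hc => (sqrt_add_one_sub_sqrt hc).symm

end

lemma tendsto_sqrt_mul_sqrt_add_one_add_sqrt {r Γ : ℝ → ℝ} {L : ℝ}
    (hr : ∀ᶠ c in atTop, 0 < r c) (hΓ : ∀ᶠ c in atTop, 0 ≤ Γ c)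
    (hrc : Tendsto (fun c => c * r c) atTop (𝓝 0))
    (hΓc : Tendsto (fun c => Γ c / c) atTop (𝓝 L)) :
    Tendsto (fun c => √(r c) * (√(Γ c + 1) + √(Γ c))) atTop (𝓝[>] 0) := by
  have hlin : Tendsto (fun c => r c * (Γ c + 1)) atTop (𝓝 0) := by
    have := hrc.mul (hΓc.add tendsto_inv_atTop_zero)
    rw [zero_mul] at this
    refine this.congr' ?_
    filter_upwards [eventually_gt_atTop 0] with c hc
    field_simp
  have hsqrt := ((continuous_sqrt.tendsto 0).comp hlin).const_mul 2
  rw [sqrt_zero, mul_zero] at hsqrt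
  refine tendsto_nhdsWithin_iff.2 ⟨squeeze_zero' ?_ ?_ hsqrt, ?_⟩
  · filter_upwards with c
    positivity
  · filter_upwards [hr, hΓ] with c hrc hΓc
    rw [Function.comp_apply, sqrt_mul hrc.le, mul_left_comm]
    gcongr
    linarith [sqrt_le_sqrt (by linarith : Γ c ≤ Γ c + 1)]
  · filter_upwards [hr, hΓ] with c hrc hΓc
    exact mul_pos (sqrt_pos.2 hrc) (by positivity)

lemma sqrt_sq_sub_sq {η x : ℝ} (h : 0 < η + x) :
    √(η ^ 2 - x ^ 2) = (η + x) * √((η - x) / (η + x)) := by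
  have : η ^ 2 - x ^ 2 = (η + x) ^ 2 * ((η - x) / (η + x)) := by
    field_simp
    ring
  rw [this, sqrt_mul (sq_nonneg _), sqrt_sq h.le]

lemma tendsto_sqrt_sq_sub_sq_mul_nhds_zero {α : Type*} {l : Filter α} {η : ℝ} {ξ g : α → ℝ}
    (hpos : ∀ᶠ c in l, 0 < η + ξ c) (hξ : Tendsto ξ l (𝓝 η))
    (hg : Tendsto (fun c => √((η - ξ c) / (η + ξ c)) * g c) l (𝓝 0)) :
    Tendsto (fun c => √(η ^ 2 - ξ c ^ 2) * g c) l (𝓝 0) := by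
  have := (hξ.const_add η).mul hg
  rw [mul_zero] at this
  refine this.congr' ?_
  filter_upwards [hpos] with c hc
  rw [sqrt_sq_sub_sq hc]
  ring

section

variable {α : Type*} {l : Filter α} {f : α → ℝ} {θ s : ℝ}

lemma tendsto_const_add_one_div_mul_log_of_atTop (hθ : 0 < θ) (hf : Tendsto f l atTop) :
    Tendsto (fun c => s + 1 / θ * log (f c)) l atTop ∧
      Tendsto (fun c => s - 1 / θ * log (f c)) l atBot := by
  have h := (tendsto_log_atTop.comp hf).const_mul_atTop (one_div_pos.2 hθ)
  refine ⟨tendsto_atTop_add_const_left _ s h, ?_⟩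
  simpa only [sub_eq_add_neg, Function.comp_def] using
    tendsto_atBot_add_const_left _ s (tendsto_neg_atTop_atBot.comp h)

lemma tendsto_const_add_one_div_mul_log_of_nhdsGT_zero (hθ : 0 < θ)
    (hf : Tendsto f l (𝓝[>] 0)) :
    Tendsto (fun c => s + 1 / θ * log (f c)) l atBot ∧
      Tendsto (fun c => s - 1 / θ * log (f c)) l atTop := by
  have h := (tendsto_log_nhdsGT_zero.comp hf).const_mul_atBot (one_div_pos.2 hθ)
  refine ⟨tendsto_atBot_add_const_left _ s h, ?_⟩
  simpa only [sub_eq_add_neg, Function.comp_def] using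
    tendsto_atTop_add_const_left _ s (tendsto_neg_atBot_atTop.comp h)

end

theorem stmt_14_general
    (ρ σ lam lamt ct : ℝ) (hρ : 0 < ρ) (hσ : 0 < σ)
    (h2 : lamt ≤ lam)
    (θ η st : ℝ) (hθ : θ = Real.sqrt (2 * ρ / σ ^ 2))
    (ξ : ℝ → ℝ)
    (hξ : ∀ c : ℝ, 0 < c → ξ c ∈ Set.Ioo 0 η ∧
      2 * ξ c + θ * c - η * Real.log ((η + ξ c) / (η - ξ c)) = 0)
    (Γ : ℝ → ℝ)
    (hΓ : ∀ c : ℝ, Γ c = θ * (c - ct) / (4 * ξ c)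
      + θ * c * (lam - lamt) / (4 * η * ξ c) + (lam - lamt) / (2 * η))
    (xb1 xb2 xs1 xs2 : ℝ → ℝ)
    (hxb1 : ∀ c : ℝ, xb1 c = st - (1 / θ) * Real.log
      (Real.sqrt ((η + ξ c) / (η - ξ c)) * (Real.sqrt (Γ c + 1) + Real.sqrt (Γ c))))
    (hxb2 : ∀ c : ℝ, xb2 c = st + (1 / θ) * Real.log
      (Real.sqrt ((η + ξ c) / (η - ξ c)) * (Real.sqrt (Γ c + 1) + Real.sqrt (Γ c))))
    (hxs1 : ∀ c : ℝ, xs1 c = st - (1 / θ) * Real.log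
      (Real.sqrt ((η - ξ c) / (η + ξ c)) * (Real.sqrt (Γ c + 1) + Real.sqrt (Γ c))))
    (hxs2 : ∀ c : ℝ, xs2 c = st + (1 / θ) * Real.log
      (Real.sqrt ((η - ξ c) / (η + ξ c)) * (Real.sqrt (Γ c + 1) + Real.sqrt (Γ c))))
    (A21 A22 : ℝ → ℝ)
    (hA21 : ∀ c : ℝ, A21 c = Real.exp (-(θ * st))
      * (Real.sqrt (η ^ 2 - (ξ c) ^ 2) / (2 * θ))
      * (Real.sqrt (Γ c + 1) - Real.sqrt (Γ c)))
    (hA22 : ∀ c : ℝ, A22 c = Real.exp (θ * st)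
      * (Real.sqrt (η ^ 2 - (ξ c) ^ 2) / (2 * θ))
      * (-Real.sqrt (Γ c + 1) - Real.sqrt (Γ c)))
    :
    Filter.Tendsto xb2 Filter.atTop Filter.atTop ∧
    Filter.Tendsto xb1 Filter.atTop Filter.atBot ∧
    Filter.Tendsto xs1 Filter.atTop Filter.atTop ∧
    Filter.Tendsto xs2 Filter.atTop Filter.atBot ∧
    Filter.Tendsto A21 Filter.atTop (nhds 0) ∧
    Filter.Tendsto A22 Filter.atTop (nhds 0) := by
  have hθ0 : 0 < θ := hθ ▸ sqrt_pos.2 (by positivity)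
  have hη0 : 0 < η := (hξ 1 one_pos).1.1.trans (hξ 1 one_pos).1.2
  have hξ0 : ∀ᶠ c in atTop, 0 < ξ c := (eventually_gt_atTop 0).mono fun c hc => (hξ c hc).1.1
  have hr := tendsto_ratio_nhdsGT_zero hθ0 hξ
  have hξη := tendsto_of_ratio_nhdsGT_zero hξ0 hη0 hr
  have hΓc := tendsto_gamma_div_self hξη hη0.ne' hΓ
  have hΓtop : Tendsto Γ atTop atTop := tendsto_id.num (by have := sub_nonneg.2 h2; positivity) hΓc
  have hP : Tendsto (fun c => √((η + ξ c) / (η - ξ c)) * (√(Γ c + 1) + √(Γ c))) atTop atTop :=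
    ((tendsto_sqrt_atTop.comp (tendsto_inv_nhdsGT_zero.comp hr)).atTop_mul_atTop₀
      (tendsto_sqrt_add_one_add_sqrt_atTop hΓtop)).congr fun c => by
        simp only [Function.comp_apply, inv_div]
  have hQ := tendsto_sqrt_mul_sqrt_add_one_add_sqrt (hr.eventually self_mem_nhdsWithin)
    (hΓtop.eventually_ge_atTop 0) (tendsto_mul_ratio_nhds_zero hθ0 hξ) hΓc
  obtain ⟨hxb2', hxb1'⟩ := tendsto_const_add_one_div_mul_log_of_atTop (s := st) hθ0 hP
  obtain ⟨hxs2', hxs1'⟩ := tendsto_const_add_one_div_mul_log_of_nhdsGT_zero (s := st) hθ0 hQ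
  refine ⟨hxb2'.congr fun c => (hxb2 c).symm, hxb1'.congr fun c => (hxb1 c).symm,
    hxs1'.congr fun c => (hxs1 c).symm, hxs2'.congr fun c => (hxs2 c).symm, ?_, ?_⟩
  · have := ((tendsto_const_nhds (x := exp (-(θ * st)))).mul (((continuous_sqrt.tendsto _).comp
      ((hξη.pow 2).const_sub (η ^ 2))).div_const (2 * θ))).mul
      (tendsto_sqrt_add_one_sub_sqrt_nhds_zero hΓtop)
    rw [mul_zero] at this
    exact this.congr fun c => (hA21 c).symm
  · have := (tendsto_sqrt_sq_sub_sq_mul_nhds_zero (hξ0.mono fun _ hc => by linarith) hξη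
      (hQ.mono_right nhdsWithin_le_nhds)).const_mul (-(exp (θ * st) / (2 * θ)))
    rw [mul_zero] at this
    exact this.congr fun c => by rw [hA22]; ring

/-- Limits as c → +∞ of the explicit Nash-equilibrium parameters. -/
theorem stmt_14
    (ρ σ lam lamt ct s1 s2 : ℝ) (hρ : 0 < ρ) (hσ : 0 < σ)
    (h1 : 0 < 1 - lam * ρ) (h2 : lamt ≤ lam) (h3 : 0 ≤ lamt)
    (h5 : 0 ≤ ct) (h8 : s1 < s2)
    (θ η st : ℝ) (hθ : θ = Real.sqrt (2 * ρ / σ ^ 2))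
    (hη : η = (1 - lam * ρ) / ρ) (hst : st = (s1 + s2) / 2)
    (ξ : ℝ → ℝ)
    (hξ : ∀ c : ℝ, 0 < c → ξ c ∈ Set.Ioo 0 η ∧
      2 * ξ c + θ * c - η * Real.log ((η + ξ c) / (η - ξ c)) = 0)
    (Γ : ℝ → ℝ)
    (hΓ : ∀ c : ℝ, Γ c = θ * (c - ct) / (4 * ξ c)
      + θ * c * (lam - lamt) / (4 * η * ξ c) + (lam - lamt) / (2 * η))
    (xb1 xb2 xs1 xs2 : ℝ → ℝ)
    (hxb1 : ∀ c : ℝ, xb1 c = st - (1 / θ) * Real.log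
      (Real.sqrt ((η + ξ c) / (η - ξ c)) * (Real.sqrt (Γ c + 1) + Real.sqrt (Γ c))))
    (hxb2 : ∀ c : ℝ, xb2 c = st + (1 / θ) * Real.log
      (Real.sqrt ((η + ξ c) / (η - ξ c)) * (Real.sqrt (Γ c + 1) + Real.sqrt (Γ c))))
    (hxs1 : ∀ c : ℝ, xs1 c = st - (1 / θ) * Real.log
      (Real.sqrt ((η - ξ c) / (η + ξ c)) * (Real.sqrt (Γ c + 1) + Real.sqrt (Γ c))))
    (hxs2 : ∀ c : ℝ, xs2 c = st + (1 / θ) * Real.log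
      (Real.sqrt ((η - ξ c) / (η + ξ c)) * (Real.sqrt (Γ c + 1) + Real.sqrt (Γ c))))
    (A21 A22 : ℝ → ℝ)
    (hA21 : ∀ c : ℝ, A21 c = Real.exp (-(θ * st))
      * (Real.sqrt (η ^ 2 - (ξ c) ^ 2) / (2 * θ))
      * (Real.sqrt (Γ c + 1) - Real.sqrt (Γ c)))
    (hA22 : ∀ c : ℝ, A22 c = Real.exp (θ * st)
      * (Real.sqrt (η ^ 2 - (ξ c) ^ 2) / (2 * θ))
      * (-Real.sqrt (Γ c + 1) - Real.sqrt (Γ c)))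
    :
    Filter.Tendsto xb2 Filter.atTop Filter.atTop ∧
    Filter.Tendsto xb1 Filter.atTop Filter.atBot ∧
    Filter.Tendsto xs1 Filter.atTop Filter.atTop ∧
    Filter.Tendsto xs2 Filter.atTop Filter.atBot ∧
    Filter.Tendsto A21 Filter.atTop (nhds 0) ∧
    Filter.Tendsto A22 Filter.atTop (nhds 0) :=
  stmt_14_general ρ σ lam lamt ct hρ hσ h2 θ η st hθ ξ hξ Γ hΓ xb1 xb2 xs1 xs2 hxb1 hxb2 hxs1 hxs2
    A21 A22 hA21 hA22
end

section
/- For each admissible c let Ṽ₂^c be the function built from the explicit solution with cost parameter c. Then for every x ∈ ℝ, lim_{c→+∞} Ṽ₂^c(x) = (s₂ − x)/ρ. -/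
open Real Filter Set Topology

/-! Because `ξ(c)` solves `F_c(ξ) = 0`, `log ((η + ξ) / (η - ξ)) ≥ θc/η`, so `η - ξ(c)` decays
like `e^{-θc/η}` while `Γ(c)` grows only linearly in `c`. Both coefficients `A₂ⱼ(c)` carry the
factor `√((η² - ξ²) Γ)` and therefore vanish in the limit, and the free boundaries `x̄₁(c)`,
`x̄₂(c)` lie at distance at least `c/(2η)` from `s̃`. Hence every fixed `x` eventually lies in the
continuation region, where `Ṽ₂ᶜ(x) = φ₂ᶜ(x) → (s₂ - x)/ρ`. -/

lemma div_le_log_of_two_mul_add_sub_log_eq_zero {η ξ t : ℝ} (hξ : 0 < ξ) (hη : 0 < η)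
    (h : 2 * ξ + t - η * log ((η + ξ) / (η - ξ)) = 0) :
    t / η ≤ log ((η + ξ) / (η - ξ)) := by
  rw [div_le_iff₀ hη]
  linarith

lemma sub_le_two_mul_exp_neg_of_le_log {η ξ s : ℝ} (hξ : 0 ≤ ξ) (hξη : ξ < η)
    (h : s ≤ log ((η + ξ) / (η - ξ))) : η - ξ ≤ 2 * η * exp (-s) := by
  have hd : 0 < η - ξ := sub_pos.2 hξη
  have hexp : exp s ≤ (η + ξ) / (η - ξ) :=
    (le_log_iff_exp_le (div_pos (by linarith) hd)).1 h
  rw [le_div_iff₀ hd] at hexp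
  rw [exp_neg, ← div_eq_mul_inv, le_div_iff₀ (exp_pos s)]
  linarith

lemma tendsto_sqrt_mul_sqrt_of_tendsto_mul {α : Type*} {l : Filter α} {u v : α → ℝ}
    (hu : ∀ᶠ a in l, 0 ≤ u a) (h : Tendsto (fun a => u a * v a) l (𝓝 0)) :
    Tendsto (fun a => √(u a) * √(v a)) l (𝓝 0) := by
  have hsqrt := (continuous_sqrt.tendsto 0).comp h
  rw [sqrt_zero] at hsqrt
  exact hsqrt.congr' (hu.mono fun a ha => sqrt_mul ha (v a))

lemma half_log_le_log_sqrt_mul {R S : ℝ} (hR : 0 < R) (hS : 1 ≤ S) :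
    log R / 2 ≤ log (√R * S) := by
  rw [← log_sqrt hR.le]
  exact log_le_log (sqrt_pos.2 hR) (le_mul_of_one_le_right (sqrt_nonneg R) hS)

lemma one_le_sqrt_add_one_add_sqrt {x : ℝ} (hx : 0 ≤ x) : 1 ≤ √(x + 1) + √x := by
  have := one_le_sqrt.2 (le_add_of_nonneg_left hx)
  linarith [sqrt_nonneg x]

lemma tendsto_sq_sub_sq_mul_affine_div {η : ℝ} {ξ : ℝ → ℝ} (hη : η ≠ 0)
    (hξ : Tendsto ξ atTop (𝓝 η)) (hcξ : Tendsto (fun c => c * (η - ξ c)) atTop (𝓝 0))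
    (p q r : ℝ) :
    Tendsto (fun c => (η ^ 2 - ξ c ^ 2) * ((p * c + q) / ξ c + r)) atTop (𝓝 0) := by
  have hd : Tendsto (fun c => η - ξ c) atTop (𝓝 0) := by
    simpa using tendsto_const_nhds (x := η) |>.sub hξ
  have hlim := (((hξ.const_add η).mul ((hcξ.const_mul p).add (hd.const_mul q))).mul
    (hξ.inv₀ hη)).add (((hξ.const_add η).mul hd).const_mul r)
  simp only [mul_zero, add_zero, zero_mul] at hlim
  exact hlim.congr fun c => by ring

def IsRootOfF (θ η : ℝ) (ξ : ℝ → ℝ) : Prop :=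
  ∀ c : ℝ, 0 < c → ξ c ∈ Ioo 0 η ∧ 2 * ξ c + θ * c - η * log ((η + ξ c) / (η - ξ c)) = 0

namespace IsRootOfF

variable {θ η : ℝ} {ξ : ℝ → ℝ}

lemma pos (hξ : IsRootOfF θ η ξ) : 0 < η :=
  (hξ 1 one_pos).1.1.trans (hξ 1 one_pos).1.2

lemma div_le_log (hξ : IsRootOfF θ η ξ) {c : ℝ} (hc : 0 < c) :
    θ * c / η ≤ log ((η + ξ c) / (η - ξ c)) :=
  div_le_log_of_two_mul_add_sub_log_eq_zero (hξ c hc).1.1 hξ.pos (hξ c hc).2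

lemma tendsto_log_atTop (hξ : IsRootOfF θ η ξ) (hθ : 0 < θ) :
    Tendsto (fun c => log ((η + ξ c) / (η - ξ c))) atTop atTop := by
  refine tendsto_atTop_mono' _ ?_ ((tendsto_id.const_mul_atTop hθ).atTop_div_const hξ.pos)
  filter_upwards [eventually_gt_atTop 0] with c hc using hξ.div_le_log hc

lemma tendsto_mul_sub (hξ : IsRootOfF θ η ξ) (hθ : 0 < θ) :
    Tendsto (fun c => c * (η - ξ c)) atTop (𝓝 0) := by
  have hdecay := (tendsto_rpow_mul_exp_neg_mul_atTop_nhds_zero 1 (θ / η)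
    (div_pos hθ hξ.pos)).const_mul (2 * η)
  rw [mul_zero] at hdecay
  refine squeeze_zero' ?_ ?_ hdecay
  · filter_upwards [eventually_gt_atTop 0] with c hc
    exact mul_nonneg hc.le (sub_nonneg.2 (hξ c hc).1.2.le)
  · filter_upwards [eventually_gt_atTop 0] with c hc
    have hbound := sub_le_two_mul_exp_neg_of_le_log (hξ c hc).1.1.le (hξ c hc).1.2
      (hξ.div_le_log hc)
    rw [rpow_one, show -(θ / η) * c = -(θ * c / η) by ring]
    calc c * (η - ξ c) ≤ c * (2 * η * exp (-(θ * c / η))) := by gcongr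
      _ = 2 * η * (c * exp (-(θ * c / η))) := by ring

lemma tendsto (hξ : IsRootOfF θ η ξ) (hθ : 0 < θ) : Tendsto ξ atTop (𝓝 η) := by
  have hlim := tendsto_const_nhds (x := η) |>.sub
    ((hξ.tendsto_mul_sub hθ).mul tendsto_inv_atTop_zero)
  rw [zero_mul, sub_zero] at hlim
  refine hlim.congr' ?_
  filter_upwards [eventually_gt_atTop 0] with c hc
  field_simp
  ring

lemma tendsto_sqrt_mul_sqrt_affine_div (hξ : IsRootOfF θ η ξ) (hθ : 0 < θ) (p q r : ℝ) :
    Tendsto (fun c => √(η ^ 2 - ξ c ^ 2) * √((p * c + q) / ξ c + r)) atTop (𝓝 0) := by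
  refine tendsto_sqrt_mul_sqrt_of_tendsto_mul ?_ <|
    tendsto_sq_sub_sq_mul_affine_div hξ.pos.ne' (hξ.tendsto hθ) (hξ.tendsto_mul_sub hθ) p q r
  filter_upwards [eventually_gt_atTop 0] with c hc
  nlinarith [(hξ c hc).1.1, (hξ c hc).1.2]

lemma tendsto_log_sqrt_mul_atTop (hξ : IsRootOfF θ η ξ) (hθ : 0 < θ) {S : ℝ → ℝ}
    (hS : ∀ᶠ c in atTop, 1 ≤ S c) :
    Tendsto (fun c => log (√((η + ξ c) / (η - ξ c)) * S c)) atTop atTop := by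
  refine tendsto_atTop_mono' _ ?_ ((hξ.tendsto_log_atTop hθ).atTop_div_const two_pos)
  filter_upwards [eventually_gt_atTop 0, hS] with c hc hSc
  obtain ⟨hξ0, hξη⟩ := (hξ c hc).1
  exact half_log_le_log_sqrt_mul (div_pos (by linarith) (by linarith)) hSc

end IsRootOfF

theorem stmt_15_general
    (ρ σ lam lamt ct s2 : ℝ) (hρ : 0 < ρ) (hσ : 0 < σ)
    (h2 : lamt ≤ lam)
    (θ η st : ℝ) (hθ : θ = Real.sqrt (2 * ρ / σ ^ 2))
    (ξ : ℝ → ℝ)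
    (hξ : ∀ c : ℝ, 0 < c → ξ c ∈ Set.Ioo 0 η ∧
      2 * ξ c + θ * c - η * Real.log ((η + ξ c) / (η - ξ c)) = 0)
    (Γ : ℝ → ℝ)
    (hΓ : ∀ c : ℝ, Γ c = θ * (c - ct) / (4 * ξ c)
      + θ * c * (lam - lamt) / (4 * η * ξ c) + (lam - lamt) / (2 * η))
    (xb1 xb2 xs1 xs2 : ℝ → ℝ)
    (hxb1 : ∀ c : ℝ, xb1 c = st - (1 / θ) * Real.log
      (Real.sqrt ((η + ξ c) / (η - ξ c)) * (Real.sqrt (Γ c + 1) + Real.sqrt (Γ c))))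
    (hxb2 : ∀ c : ℝ, xb2 c = st + (1 / θ) * Real.log
      (Real.sqrt ((η + ξ c) / (η - ξ c)) * (Real.sqrt (Γ c + 1) + Real.sqrt (Γ c))))
    (A21 A22 : ℝ → ℝ)
    (hA21 : ∀ c : ℝ, A21 c = Real.exp (-(θ * st))
      * (Real.sqrt (η ^ 2 - (ξ c) ^ 2) / (2 * θ))
      * (Real.sqrt (Γ c + 1) - Real.sqrt (Γ c)))
    (hA22 : ∀ c : ℝ, A22 c = Real.exp (θ * st)
      * (Real.sqrt (η ^ 2 - (ξ c) ^ 2) / (2 * θ))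
      * (-Real.sqrt (Γ c + 1) - Real.sqrt (Γ c)))
    (φ2 : ℝ → ℝ → ℝ)
    (hφ2 : ∀ c x : ℝ, φ2 c x = A21 c * Real.exp (θ * x)
      + A22 c * Real.exp (-(θ * x)) + (s2 - x) / ρ)
    (V2 : ℝ → ℝ → ℝ)
    (hV2 : ∀ c x : ℝ, V2 c x =
      if x ≤ xb1 c then φ2 c (xs1 c) + ct + lamt * (xs1 c - x)
      else if x < xb2 c then φ2 c x
      else φ2 c (xs2 c) - c - lam * (x - xs2 c))
    :
    ∀ x : ℝ, Filter.Tendsto (fun c => V2 c x) Filter.atTop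
      (nhds ((s2 - x) / ρ)) := by
  intro x
  have hθ0 : 0 < θ := hθ ▸ sqrt_pos.2 (by positivity)
  have hroot : IsRootOfF θ η ξ := hξ
  have hΓ_affine : ∀ r c, Γ c + r = (θ * (1 + (lam - lamt) / η) / 4 * c + -(θ * ct / 4)) / ξ c
      + ((lam - lamt) / (2 * η) + r) := fun r c => by rw [hΓ]; ring
  have hΓ0 : ∀ᶠ c in atTop, 0 ≤ Γ c := by
    filter_upwards [eventually_gt_atTop 0, eventually_ge_atTop ct] with c hc hct
    have hη0 := hroot.pos
    have hξ0 := (hξ c hc).1.1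
    have hcct := sub_nonneg.2 hct
    have hlam := sub_nonneg.2 h2
    rw [hΓ]
    positivity
  have hP : ∀ r, Tendsto (fun c => √(η ^ 2 - ξ c ^ 2) * √(Γ c + r)) atTop (𝓝 0) := fun r => by
    simpa only [hΓ_affine] using hroot.tendsto_sqrt_mul_sqrt_affine_div hθ0 _ _ _
  have hA21lim : Tendsto A21 atTop (𝓝 0) := by
    simpa using (((hP 1).sub (hP 0)).const_mul (exp (-(θ * st)) / (2 * θ))).congr
      fun c => by rw [hA21, add_zero]; ring
  have hA22lim : Tendsto A22 atTop (𝓝 0) := by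
    simpa using (((hP 1).neg.sub (hP 0)).const_mul (exp (θ * st) / (2 * θ))).congr
      fun c => by rw [hA22, add_zero]; ring
  have hφ : Tendsto (fun c => φ2 c x) atTop (𝓝 ((s2 - x) / ρ)) := by
    simpa [← hφ2] using ((hA21lim.mul_const (exp (θ * x))).add
      (hA22lim.mul_const (exp (-(θ * x))))).add_const ((s2 - x) / ρ)
  have hwidth := (hroot.tendsto_log_sqrt_mul_atTop hθ0
    (hΓ0.mono fun c => one_le_sqrt_add_one_add_sqrt)).const_mul_atTop (one_div_pos.2 hθ0)
  refine hφ.congr' ?_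
  filter_upwards [hwidth.eventually_gt_atTop |x - st|] with c hc
  obtain ⟨hlo, hhi⟩ := abs_lt.1 hc
  rw [hV2, if_neg (by rw [hxb1]; linarith), if_pos (by rw [hxb2]; linarith)]

/-- The candidate value function Ṽ₂ᶜ converges pointwise, as c → +∞,
to (s₂ − x)/ρ. -/
theorem stmt_15
    (ρ σ lam lamt ct s1 s2 : ℝ) (hρ : 0 < ρ) (hσ : 0 < σ)
    (h1 : 0 < 1 - lam * ρ) (h2 : lamt ≤ lam) (h3 : 0 ≤ lamt)
    (h5 : 0 ≤ ct) (h8 : s1 < s2)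
    (θ η st : ℝ) (hθ : θ = Real.sqrt (2 * ρ / σ ^ 2))
    (hη : η = (1 - lam * ρ) / ρ) (hst : st = (s1 + s2) / 2)
    (ξ : ℝ → ℝ)
    (hξ : ∀ c : ℝ, 0 < c → ξ c ∈ Set.Ioo 0 η ∧
      2 * ξ c + θ * c - η * Real.log ((η + ξ c) / (η - ξ c)) = 0)
    (Γ : ℝ → ℝ)
    (hΓ : ∀ c : ℝ, Γ c = θ * (c - ct) / (4 * ξ c)
      + θ * c * (lam - lamt) / (4 * η * ξ c) + (lam - lamt) / (2 * η))
    (xb1 xb2 xs1 xs2 : ℝ → ℝ)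
    (hxb1 : ∀ c : ℝ, xb1 c = st - (1 / θ) * Real.log
      (Real.sqrt ((η + ξ c) / (η - ξ c)) * (Real.sqrt (Γ c + 1) + Real.sqrt (Γ c))))
    (hxb2 : ∀ c : ℝ, xb2 c = st + (1 / θ) * Real.log
      (Real.sqrt ((η + ξ c) / (η - ξ c)) * (Real.sqrt (Γ c + 1) + Real.sqrt (Γ c))))
    (hxs1 : ∀ c : ℝ, xs1 c = st - (1 / θ) * Real.log
      (Real.sqrt ((η - ξ c) / (η + ξ c)) * (Real.sqrt (Γ c + 1) + Real.sqrt (Γ c))))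
    (hxs2 : ∀ c : ℝ, xs2 c = st + (1 / θ) * Real.log
      (Real.sqrt ((η - ξ c) / (η + ξ c)) * (Real.sqrt (Γ c + 1) + Real.sqrt (Γ c))))
    (A21 A22 : ℝ → ℝ)
    (hA21 : ∀ c : ℝ, A21 c = Real.exp (-(θ * st))
      * (Real.sqrt (η ^ 2 - (ξ c) ^ 2) / (2 * θ))
      * (Real.sqrt (Γ c + 1) - Real.sqrt (Γ c)))
    (hA22 : ∀ c : ℝ, A22 c = Real.exp (θ * st)
      * (Real.sqrt (η ^ 2 - (ξ c) ^ 2) / (2 * θ))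
      * (-Real.sqrt (Γ c + 1) - Real.sqrt (Γ c)))
    (φ2 : ℝ → ℝ → ℝ)
    (hφ2 : ∀ c x : ℝ, φ2 c x = A21 c * Real.exp (θ * x)
      + A22 c * Real.exp (-(θ * x)) + (s2 - x) / ρ)
    (V2 : ℝ → ℝ → ℝ)
    (hV2 : ∀ c x : ℝ, V2 c x =
      if x ≤ xb1 c then φ2 c (xs1 c) + ct + lamt * (xs1 c - x)
      else if x < xb2 c then φ2 c x
      else φ2 c (xs2 c) - c - lam * (x - xs2 c))
    :
    ∀ x : ℝ, Filter.Tendsto (fun c => V2 c x) Filter.atTop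
      (nhds ((s2 - x) / ρ)) :=
  stmt_15_general ρ σ lam lamt ct s2 hρ hσ h2 θ η st hθ ξ hξ Γ hΓ xb1 xb2 xs1 xs2 hxb1 hxb2 A21 A22
    hA21 hA22 φ2 hφ2 V2 hV2
end

section
/- The function c ↦ x̄₂(c) is strictly increasing on (c̃, ∞), and the function c ↦ x̄₁(c) is strictly decreasing on (c̃, ∞). -/
/-!
Write φ(x) = η log((η + x)/(η - x)) - 2x, so that ξ(c) is the solution of φ(ξ) = θc.
Since φ'(x) = 2x²/(η² - x²) is positive and increasing on (0, η), φ is increasing, hence so is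
ξ; and φ is convex with φ(0) = 0, so φ(x)/x is increasing. Substituting θc = φ(ξ) turns Γ into
(k φ(ξ)/ξ - θc̃/ξ)/4 + const with k ≥ 1 and θc̃ ≥ 0, which is therefore increasing in ξ, hence in c.
Both factors inside the logarithm defining x̄ᵢ then increase with c.
-/

open Real Set

noncomputable def phi (η x : ℝ) : ℝ := η * log ((η + x) / (η - x)) - 2 * x

lemma hasDerivAt_phi {η x : ℝ} (hl : 0 < η + x) (hr : 0 < η - x) :
    HasDerivAt (phi η) (2 * x ^ 2 / (η ^ 2 - x ^ 2)) x := by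
  have hnum : HasDerivAt (fun y => η + y) 1 x := (hasDerivAt_id' x).const_add η
  have hden : HasDerivAt (fun y => η - y) (-1) x := by
    simpa using (hasDerivAt_id' x).const_sub η
  have hratio := (hnum.fun_div hden hr.ne').log (div_pos hl hr).ne'
  refine ((hratio.const_mul η).sub ((hasDerivAt_id' x).const_mul 2)).congr_deriv ?_
  have := hl.ne'
  have := hr.ne'
  have : η ^ 2 - x ^ 2 ≠ 0 := by rw [sq_sub_sq]; exact (mul_pos hl hr).ne'
  field_simp
  ring

lemma continuousOn_phi (η : ℝ) : ContinuousOn (phi η) (Ico 0 η) := fun x hx =>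
  (hasDerivAt_phi (by linarith [hx.1, hx.2]) (by linarith [hx.2])).continuousAt.continuousWithinAt

lemma deriv_phi {η x : ℝ} (hx : x ∈ Ioo 0 η) : deriv (phi η) x = 2 * x ^ 2 / (η ^ 2 - x ^ 2) :=
  (hasDerivAt_phi (by linarith [hx.1, hx.2]) (by linarith [hx.2])).deriv

lemma strictMonoOn_phi (η : ℝ) : StrictMonoOn (phi η) (Ico 0 η) := by
  refine strictMonoOn_of_deriv_pos (convex_Ico 0 η) (continuousOn_phi η) fun x hx => ?_
  rw [interior_Ico] at hx
  rw [deriv_phi hx]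
  have : 0 < η ^ 2 - x ^ 2 := by nlinarith [hx.1, hx.2]
  have := hx.1
  positivity

lemma strictConvexOn_phi (η : ℝ) : StrictConvexOn ℝ (Ico 0 η) (phi η) := by
  refine StrictMonoOn.strictConvexOn_of_deriv (convex_Ico 0 η) (continuousOn_phi η) ?_
  rw [interior_Ico]
  intro x hx y hy hxy
  rw [deriv_phi hx, deriv_phi hy]
  have : 0 < η ^ 2 - y ^ 2 := by nlinarith [hy.1, hy.2]
  rw [div_lt_div_iff₀ (by nlinarith [hx.1, hy.2]) this]
  have hsq : x ^ 2 < y ^ 2 := by nlinarith [hx.1]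
  nlinarith [mul_lt_mul_of_pos_left hsq (by nlinarith [hx.1, hx.2] : 0 < η ^ 2)]

lemma strictMonoOn_phi_div (η : ℝ) : StrictMonoOn (fun x => phi η x / x) (Ioo 0 η) := by
  intro x hx y hy hxy
  have h0 : (0 : ℝ) ∈ Ico 0 η := ⟨le_rfl, hx.1.trans hx.2⟩
  have := (strictConvexOn_phi η).secant_strict_mono h0 (Ioo_subset_Ico_self hx)
    (Ioo_subset_Ico_self hy) hx.1.ne' hy.1.ne' hxy
  simpa [phi] using this

lemma strictMonoOn_phi_sub_div {η k b : ℝ} (hk : 0 < k) (hb : 0 ≤ b) :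
    StrictMonoOn (fun x => (k * phi η x - b) / (4 * x)) (Ioo 0 η) := by
  intro x hx y hy hxy
  have hslope := mul_lt_mul_of_pos_left (strictMonoOn_phi_div η hx hy hxy) hk
  have hb' : b / y ≤ b / x := div_le_div_of_nonneg_left hb hx.1 hxy.le
  have hx0 := hx.1.ne'
  have hy0 := hy.1.ne'
  calc (k * phi η x - b) / (4 * x) = (k * (phi η x / x) - b / x) / 4 := by field_simp
    _ < (k * (phi η y / y) - b / y) / 4 := by linarith
    _ = (k * phi η y - b) / (4 * y) := by field_simp

lemma strictMonoOn_of_phi_eq {s : Set ℝ} {η θ : ℝ} {ξ : ℝ → ℝ} (hθ : 0 < θ)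
    (hξ : ∀ c ∈ s, ξ c ∈ Ico 0 η ∧ phi η (ξ c) = θ * c) : StrictMonoOn ξ s := by
  intro c hc c' hc' hcc'
  obtain ⟨hm, hφ⟩ := hξ c hc
  obtain ⟨hm', hφ'⟩ := hξ c' hc'
  refine ((strictMonoOn_phi η).lt_iff_lt hm hm').mp ?_
  rw [hφ, hφ']
  gcongr

lemma log_sqrt_ratio_mul_lt {η x x' g g' : ℝ} (hx : -η < x) (hxx' : x < x') (hx' : x' < η)
    (hg : 0 ≤ g) (hgg' : g ≤ g') :
    log (√((η + x) / (η - x)) * (√(g + 1) + √g))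
      < log (√((η + x') / (η - x')) * (√(g' + 1) + √g')) := by
  have hratio_pos : 0 < (η + x) / (η - x) := div_pos (by linarith) (by linarith)
  have hratio : (η + x) / (η - x) < (η + x') / (η - x') := by
    rw [div_lt_div_iff₀ (by linarith) (by linarith)]
    nlinarith
  have hsum_pos : 0 < √(g + 1) + √g := by positivity
  have hsum : √(g + 1) + √g ≤ √(g' + 1) + √g' := by gcongr
  exact log_lt_log (by positivity) (mul_lt_mul (sqrt_lt_sqrt hratio_pos.le hratio) hsum
    hsum_pos (sqrt_nonneg _))

lemma StrictMonoOn.log_sqrt_ratio_mul {s : Set ℝ} {η : ℝ} {ξ Γ : ℝ → ℝ}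
    (hξ : StrictMonoOn ξ s) (hΓ : MonotoneOn Γ s) (hξ_mem : ∀ c ∈ s, ξ c ∈ Ioo (-η) η)
    (hΓ_nonneg : ∀ c ∈ s, 0 ≤ Γ c) :
    StrictMonoOn (fun c => log (√((η + ξ c) / (η - ξ c)) * (√(Γ c + 1) + √(Γ c)))) s :=
  fun c hc c' hc' hcc' => log_sqrt_ratio_mul_lt (hξ_mem c hc).1 (hξ hc hc' hcc')
    (hξ_mem c' hc').2 (hΓ_nonneg c hc) (hΓ hc hc' hcc'.le)

theorem stmt_16_general
    (ρ σ lam lamt ct : ℝ) (hρ : 0 < ρ) (hσ : 0 < σ)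
    (h1 : 0 < 1 - lam * ρ) (h2 : lamt ≤ lam)
    (h5 : 0 ≤ ct)
    (θ η st : ℝ) (hθ : θ = Real.sqrt (2 * ρ / σ ^ 2))
    (hη : η = (1 - lam * ρ) / ρ)
    (ξ : ℝ → ℝ)
    (hξ : ∀ c : ℝ, 0 < c → ξ c ∈ Set.Ioo 0 η ∧
      2 * ξ c + θ * c - η * Real.log ((η + ξ c) / (η - ξ c)) = 0)
    (Γ : ℝ → ℝ)
    (hΓ : ∀ c : ℝ, Γ c = θ * (c - ct) / (4 * ξ c)
      + θ * c * (lam - lamt) / (4 * η * ξ c) + (lam - lamt) / (2 * η))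
    (xb1 xb2 : ℝ → ℝ)
    (hxb1 : ∀ c : ℝ, xb1 c = st - (1 / θ) * Real.log
      (Real.sqrt ((η + ξ c) / (η - ξ c)) * (Real.sqrt (Γ c + 1) + Real.sqrt (Γ c))))
    (hxb2 : ∀ c : ℝ, xb2 c = st + (1 / θ) * Real.log
      (Real.sqrt ((η + ξ c) / (η - ξ c)) * (Real.sqrt (Γ c + 1) + Real.sqrt (Γ c))))
    :
    StrictMonoOn xb2 (Set.Ioi ct) ∧ StrictAntiOn xb1 (Set.Ioi ct) := by
  have hθ0 : 0 < θ := hθ ▸ sqrt_pos.mpr (by positivity)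
  have hη0 : 0 < η := hη ▸ div_pos h1 hρ
  have hlam : 0 ≤ lam - lamt := sub_nonneg.mpr h2
  have hξc : ∀ c ∈ Ioi ct, ξ c ∈ Ioo 0 η ∧ phi η (ξ c) = θ * c := fun c hc => by
    obtain ⟨hmem, heq⟩ := hξ c (h5.trans_lt hc)
    exact ⟨hmem, by unfold phi; linarith⟩
  have hξ_mono : StrictMonoOn ξ (Ioi ct) :=
    strictMonoOn_of_phi_eq hθ0 fun c hc => ⟨Ioo_subset_Ico_self (hξc c hc).1, (hξc c hc).2⟩
  have hΓ_eq : ∀ c ∈ Ioi ct, Γ c = ((1 + (lam - lamt) / η) * phi η (ξ c) - θ * ct) / (4 * ξ c)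
      + (lam - lamt) / (2 * η) := fun c hc => by
    rw [hΓ c, (hξc c hc).2]
    have := (hξc c hc).1.1.ne'
    field_simp
    ring
  have hΓ_mono : StrictMonoOn Γ (Ioi ct) := fun c hc c' hc' hcc' => by
    have := strictMonoOn_phi_sub_div (k := 1 + (lam - lamt) / η) (b := θ * ct)
      (by positivity) (by positivity) (hξc c hc).1 (hξc c' hc').1 (hξ_mono hc hc' hcc')
    rw [hΓ_eq c hc, hΓ_eq c' hc']
    linarith
  have hΓ_nonneg : ∀ c ∈ Ioi ct, 0 ≤ Γ c := fun c hc => by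
    have hξ0 := (hξc c hc).1.1
    have hc0 : 0 ≤ c := h5.trans (le_of_lt hc)
    have : 0 ≤ c - ct := sub_nonneg.mpr (le_of_lt hc)
    rw [hΓ c]
    positivity
  have hlog := hξ_mono.log_sqrt_ratio_mul hΓ_mono.monotoneOn
    (fun c hc => ⟨by linarith [(hξc c hc).1.1], (hξc c hc).1.2⟩) hΓ_nonneg
  refine ⟨fun c hc c' hc' hcc' => ?_, fun c hc c' hc' hcc' => ?_⟩
  · rw [hxb2, hxb2]
    gcongr st + _ * ?_
    exact hlog hc hc' hcc'
  · rw [hxb1, hxb1]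
    gcongr st - _ * ?_
    exact hlog hc hc' hcc'

/-- c ↦ x̄₂(c) is strictly increasing and c ↦ x̄₁(c) strictly decreasing
on (c̃, ∞). -/
theorem stmt_16
    (ρ σ lam lamt ct s1 s2 : ℝ) (hρ : 0 < ρ) (hσ : 0 < σ)
    (h1 : 0 < 1 - lam * ρ) (h2 : lamt ≤ lam) (h3 : 0 ≤ lamt)
    (h5 : 0 ≤ ct) (h8 : s1 < s2)
    (θ η st : ℝ) (hθ : θ = Real.sqrt (2 * ρ / σ ^ 2))
    (hη : η = (1 - lam * ρ) / ρ) (hst : st = (s1 + s2) / 2)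
    (ξ : ℝ → ℝ)
    (hξ : ∀ c : ℝ, 0 < c → ξ c ∈ Set.Ioo 0 η ∧
      2 * ξ c + θ * c - η * Real.log ((η + ξ c) / (η - ξ c)) = 0)
    (Γ : ℝ → ℝ)
    (hΓ : ∀ c : ℝ, Γ c = θ * (c - ct) / (4 * ξ c)
      + θ * c * (lam - lamt) / (4 * η * ξ c) + (lam - lamt) / (2 * η))
    (xb1 xb2 xs1 xs2 : ℝ → ℝ)
    (hxb1 : ∀ c : ℝ, xb1 c = st - (1 / θ) * Real.log
      (Real.sqrt ((η + ξ c) / (η - ξ c)) * (Real.sqrt (Γ c + 1) + Real.sqrt (Γ c))))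
    (hxb2 : ∀ c : ℝ, xb2 c = st + (1 / θ) * Real.log
      (Real.sqrt ((η + ξ c) / (η - ξ c)) * (Real.sqrt (Γ c + 1) + Real.sqrt (Γ c))))
    (hxs1 : ∀ c : ℝ, xs1 c = st - (1 / θ) * Real.log
      (Real.sqrt ((η - ξ c) / (η + ξ c)) * (Real.sqrt (Γ c + 1) + Real.sqrt (Γ c))))
    (hxs2 : ∀ c : ℝ, xs2 c = st + (1 / θ) * Real.log
      (Real.sqrt ((η - ξ c) / (η + ξ c)) * (Real.sqrt (Γ c + 1) + Real.sqrt (Γ c))))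
    (A21 A22 : ℝ → ℝ)
    (hA21 : ∀ c : ℝ, A21 c = Real.exp (-(θ * st))
      * (Real.sqrt (η ^ 2 - (ξ c) ^ 2) / (2 * θ))
      * (Real.sqrt (Γ c + 1) - Real.sqrt (Γ c)))
    (hA22 : ∀ c : ℝ, A22 c = Real.exp (θ * st)
      * (Real.sqrt (η ^ 2 - (ξ c) ^ 2) / (2 * θ))
      * (-Real.sqrt (Γ c + 1) - Real.sqrt (Γ c)))
    :
    StrictMonoOn xb2 (Set.Ioi ct) ∧ StrictAntiOn xb1 (Set.Ioi ct) :=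
  stmt_16_general ρ σ lam lamt ct hρ hσ h1 h2 h5 θ η st hθ hη ξ hξ Γ hΓ xb1 xb2 hxb1 hxb2
end

section
/- For every c > 0 one has ξ(c) − c·ξ′(c) > 0, where ξ′(c) = (θ/2)·(η² − ξ(c)²)/ξ(c)²; consequently the function c ↦ c/ξ(c) is strictly increasing on (0, ∞). -/
open Real Set

/-! Writing `F_c(x) = θc - G(x)`, the defining equation reads `G(ξ(c)) = θc`, and `G` is strictly
increasing on `(0, η)`, hence so is `ξ`. Since `θc·(η² - ξ²)/(2ξ²) = G(ξ)/G'(ξ)`, the first claim is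
`G(x) < x·G'(x)`, which holds because `x·G'(x) - G(x)` vanishes at `0` and has derivative
`x·G''(x) > 0`. The same inequality makes `G(x)/x` strictly increasing, and
`c/ξ(c) = G(ξ(c))/(θ·ξ(c))`. -/

theorem strictMonoOn_of_hasDerivAt_pos {D : Set ℝ} (hD : Convex ℝ D) {f f' : ℝ → ℝ}
    (hf : ∀ x ∈ D, HasDerivAt f (f' x) x) (hf'₀ : ∀ x ∈ interior D, 0 < f' x) :
    StrictMonoOn f D :=
  strictMonoOn_of_hasDerivWithinAt_pos hD (fun x hx ↦ (hf x hx).continuousAt.continuousWithinAt)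
    (fun x hx ↦ (hf x (interior_subset hx)).hasDerivWithinAt) hf'₀

noncomputable def G (η x : ℝ) : ℝ := η * log ((η + x) / (η - x)) - 2 * x

theorem hasDerivAt_G {η x : ℝ} (h₁ : η + x ≠ 0) (h₂ : η - x ≠ 0) :
    HasDerivAt (G η) (2 * x ^ 2 / (η ^ 2 - x ^ 2)) x := by
  have hquot : HasDerivAt (fun y ↦ (η + y) / (η - y))
      ((1 * (η - x) - (η + x) * (-1)) / (η - x) ^ 2) x :=
    ((hasDerivAt_id x).const_add η).div ((hasDerivAt_id x).const_sub η) h₂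
  have := ((hquot.log (div_ne_zero h₁ h₂)).const_mul η).sub ((hasDerivAt_id x).const_mul 2)
  refine this.congr_deriv ?_
  have h₃ : η ^ 2 - x ^ 2 ≠ 0 := by
    rw [show η ^ 2 - x ^ 2 = (η + x) * (η - x) by ring]; exact mul_ne_zero h₁ h₂
  field_simp
  ring

theorem strictMonoOn_G {η : ℝ} : StrictMonoOn (G η) (Ioo 0 η) := by
  refine strictMonoOn_of_hasDerivAt_pos (convex_Ioo 0 η)
    (fun x hx ↦ hasDerivAt_G (by linarith [hx.1, hx.2]) (by linarith [hx.1, hx.2])) ?_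
  rw [interior_Ioo]
  rintro x ⟨hx₀, hxη⟩
  exact div_pos (by positivity) (by nlinarith)

theorem G_lt_mul_deriv {η x : ℝ} (hx₀ : 0 < x) (hxη : x < η) :
    G η x < x * (2 * x ^ 2 / (η ^ 2 - x ^ 2)) := by
  set φ : ℝ → ℝ := fun y ↦ 2 * y ^ 3 / (η ^ 2 - y ^ 2) - G η y
  have hderiv : ∀ y ∈ Ico 0 η, HasDerivAt φ (4 * η ^ 2 * y ^ 2 / (η ^ 2 - y ^ 2) ^ 2) y := by
    rintro y ⟨hy₀, hyη⟩
    have hne : η ^ 2 - y ^ 2 ≠ 0 := by nlinarith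
    have hcube : HasDerivAt (fun y : ℝ ↦ 2 * y ^ 3) (2 * (3 * y ^ 2)) y := by
      simpa using (hasDerivAt_pow 3 y).const_mul 2
    have := (hcube.div ((hasDerivAt_pow 2 y).const_sub (η ^ 2)) hne).sub
      (hasDerivAt_G (η := η) (by linarith) (by linarith))
    refine this.congr_deriv ?_
    field_simp
    ring
  have hmono : StrictMonoOn φ (Ico 0 η) := by
    refine strictMonoOn_of_hasDerivAt_pos (convex_Ico 0 η) hderiv ?_
    rw [interior_Ico]
    rintro y ⟨hy₀, hyη⟩
    have : 0 < η := hy₀.trans hyη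
    have : 0 < η ^ 2 - y ^ 2 := by nlinarith
    positivity
  have hφ := hmono ⟨le_rfl, hx₀.trans hxη⟩ ⟨hx₀.le, hxη⟩ hx₀
  have hG₀ : G η 0 = 0 := by simp [G]
  simp only [φ, hG₀] at hφ
  have : x * (2 * x ^ 2 / (η ^ 2 - x ^ 2)) = 2 * x ^ 3 / (η ^ 2 - x ^ 2) := by ring
  norm_num at hφ
  linarith

theorem strictMonoOn_G_div_self {η : ℝ} : StrictMonoOn (fun x ↦ G η x / x) (Ioo 0 η) := by
  refine strictMonoOn_of_hasDerivAt_pos (convex_Ioo 0 η)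
    (fun x hx ↦ (hasDerivAt_G (by linarith [hx.1, hx.2]) (by linarith [hx.1, hx.2])).div
      (hasDerivAt_id x) hx.1.ne') ?_
  rw [interior_Ioo]
  rintro x ⟨hx₀, hxη⟩
  have := G_lt_mul_deriv hx₀ hxη
  simp only [mul_one]
  apply div_pos <;> nlinarith

theorem stmt_17_general (η θ : ℝ) (hθ : 0 < θ) (ξ : ℝ → ℝ)
    (hξ : ∀ c : ℝ, 0 < c → ξ c ∈ Set.Ioo 0 η ∧
      2 * ξ c + θ * c - η * Real.log ((η + ξ c) / (η - ξ c)) = 0) :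
    (∀ c : ℝ, 0 < c →
      0 < ξ c - c * ((θ / 2) * (η ^ 2 - (ξ c) ^ 2) / (ξ c) ^ 2)) ∧
    StrictMonoOn (fun c => c / ξ c) (Set.Ioi 0) := by
  have hG : ∀ c, 0 < c → G η (ξ c) = θ * c := fun c hc ↦ by
    unfold G; linarith [(hξ c hc).2]
  refine ⟨fun c hc ↦ ?_, fun a ha b hb hab ↦ ?_⟩
  · obtain ⟨hξ₀, hξη⟩ := (hξ c hc).1
    have hlt := G_lt_mul_deriv hξ₀ hξη
    rw [hG c hc] at hlt
    have hD : 0 < η ^ 2 - ξ c ^ 2 := by nlinarith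
    rw [sub_pos]
    calc c * (θ / 2 * (η ^ 2 - ξ c ^ 2) / ξ c ^ 2)
        = θ * c * ((η ^ 2 - ξ c ^ 2) / (2 * ξ c ^ 2)) := by ring
      _ < ξ c * (2 * ξ c ^ 2 / (η ^ 2 - ξ c ^ 2)) * ((η ^ 2 - ξ c ^ 2) / (2 * ξ c ^ 2)) :=
        mul_lt_mul_of_pos_right hlt (by positivity)
      _ = ξ c := by field_simp
  · have hξab : ξ a < ξ b := (strictMonoOn_G.lt_iff_lt (hξ a ha).1 (hξ b hb).1).mp
      (by rw [hG a ha, hG b hb]; exact mul_lt_mul_of_pos_left hab hθ)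
    have := strictMonoOn_G_div_self (hξ a ha).1 (hξ b hb).1 hξab
    simp only [hG a ha, hG b hb, mul_div_assoc] at this
    exact lt_of_mul_lt_mul_left this hθ.le

/-- For every `c > 0`, `ξ(c) − c·ξ′(c) > 0` (with
`ξ′(c) = (θ/2)(η² − ξ(c)²)/ξ(c)²`); consequently `c ↦ c/ξ(c)` is strictly
increasing on `(0, ∞)`. -/
theorem stmt_17 (η θ : ℝ) (hη : 0 < η) (hθ : 0 < θ) (ξ : ℝ → ℝ)
    (hξ : ∀ c : ℝ, 0 < c → ξ c ∈ Set.Ioo 0 η ∧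
      2 * ξ c + θ * c - η * Real.log ((η + ξ c) / (η - ξ c)) = 0) :
    (∀ c : ℝ, 0 < c →
      0 < ξ c - c * ((θ / 2) * (η ^ 2 - (ξ c) ^ 2) / (ξ c) ^ 2)) ∧
    StrictMonoOn (fun c => c / ξ c) (Set.Ioi 0) :=
  stmt_17_general η θ hθ ξ hξ
end

section
/- Assume λ = λ̃ and c̃ > 0. Then for i, j ∈ {1,2} with i ≠ j: lim_{c→c̃⁺} x̄ᵢ(c) = lim_{c→c̃⁺} x_j*(c) = s̃ + ((−1)^i/(2θ))·log((η + ξ(c̃))/(η − ξ(c̃))), where ξ(c̃) is the unique zero in (0, η) of F_{c̃}. -/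
/-!
The left side of `η · log ((η + x) / (η - x)) - 2x = θc`, whose root is `ξ(c)`, is strictly
increasing on `(0, η)` (its derivative is `2x² / (η² - x²)`), so `ξ` is continuous. When
`λ = λ̃`, `Γ(c) = θ(c - c̃) / (4ξ(c))` tends to `0` as `c → c̃`, hence `√(Γ + 1) + √Γ → 1`, and
each logarithm tends to `± ½ · log ((η + ξ(c̃)) / (η - ξ(c̃)))`.
-/

open Real Filter Set Topology

theorem StrictMonoOn.tendsto_of_tendsto_comp {α β γ : Type*} [LinearOrder β] [TopologicalSpace β]
    [OrderTopology β] [DenselyOrdered β] [NoMinOrder β] [NoMaxOrder β]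
    [LinearOrder γ] [TopologicalSpace γ] [OrderTopology γ]
    {G : β → γ} {s : Set β} {x₀ : β} {L : Filter α} {u : α → β}
    (hG : StrictMonoOn G s) (hs : s ∈ 𝓝 x₀) (hu : ∀ᶠ c in L, u c ∈ s)
    (h : Tendsto (G ∘ u) L (𝓝 (G x₀))) : Tendsto u L (𝓝 x₀) := by
  have hx₀ : x₀ ∈ s := mem_of_mem_nhds hs
  refine tendsto_order.2 ⟨fun a ha => ?_, fun b hb => ?_⟩
  · obtain ⟨y, hys, hy⟩ :=
      Filter.nonempty_of_mem (inter_mem (mem_nhdsWithin_of_mem_nhds hs) (Ioo_mem_nhdsLT ha))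
    filter_upwards [hu, (tendsto_order.1 h).1 _ (hG hys hx₀ hy.2)] with c hcs hc
    exact hy.1.trans ((hG.lt_iff_lt hys hcs).1 hc)
  · obtain ⟨y, hys, hy⟩ :=
      Filter.nonempty_of_mem (inter_mem (mem_nhdsWithin_of_mem_nhds hs) (Ioo_mem_nhdsGT hb))
    filter_upwards [hu, (tendsto_order.1 h).2 _ (hG hx₀ hys hy.1)] with c hcs hc
    exact ((hG.lt_iff_lt hcs hys).1 hc).trans hy.2

theorem strictMonoOn_mul_log_div_sub {η : ℝ} :
    StrictMonoOn (fun x => η * log ((η + x) / (η - x)) - 2 * x) (Ioo 0 η) := by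
  have hderiv : ∀ x ∈ Ioo 0 η,
      HasDerivAt (fun x => η * log ((η + x) / (η - x)) - 2 * x)
        (2 * x ^ 2 / ((η + x) * (η - x))) x := by
    rintro x ⟨hx0, hxη⟩
    have hp : 0 < η + x := by linarith
    have hm : 0 < η - x := by linarith
    refine ((((hasDerivAt_id x).const_add η).div ((hasDerivAt_id x).const_sub η) hm.ne').log
      (div_pos hp hm).ne' |>.const_mul η |>.sub ((hasDerivAt_id x).const_mul 2)).congr_deriv ?_
    simp only [id, Pi.div_apply]
    field_simp
    ring
  refine strictMonoOn_of_hasDerivWithinAt_pos (convex_Ioo 0 η)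
    (fun x hx => (hderiv x hx).continuousAt.continuousWithinAt)
    (fun x hx => (hderiv x (interior_subset hx)).hasDerivWithinAt) fun x hx => ?_
  rw [interior_Ioo] at hx
  obtain ⟨hx0, hxη⟩ := hx
  have hp : 0 < η + x := by linarith
  have hm : 0 < η - x := by linarith
  positivity

theorem tendsto_log_sqrt_mul_sqrt_add_sqrt {α : Type*} {L : Filter α} {g Γ : α → ℝ} {a : ℝ}
    (ha : 0 < a) (hg : Tendsto g L (𝓝 a)) (hΓ : Tendsto Γ L (𝓝 0)) :
    Tendsto (fun c => log (√(g c) * (√(Γ c + 1) + √(Γ c)))) L (𝓝 (log a / 2)) := by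
  have := (hg.sqrt.mul ((hΓ.add_const 1).sqrt.add hΓ.sqrt)).log
    (by simpa using (sqrt_pos.2 ha).ne')
  simpa [log_sqrt ha.le] using this

theorem continuousAt_of_forall_root {θ η c₀ : ℝ} {ξ : ℝ → ℝ}
    (hξ : ∀ c : ℝ, 0 < c → ξ c ∈ Ioo 0 η ∧
      2 * ξ c + θ * c - η * log ((η + ξ c) / (η - ξ c)) = 0)
    (hc₀ : 0 < c₀) : ContinuousAt ξ c₀ := by
  have hroot : ∀ c, 0 < c → η * log ((η + ξ c) / (η - ξ c)) - 2 * ξ c = θ * c := fun c hc => by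
    linarith [(hξ c hc).2]
  have hpos : ∀ᶠ c in 𝓝 c₀, 0 < c := lt_mem_nhds hc₀
  refine strictMonoOn_mul_log_div_sub.tendsto_of_tendsto_comp
    (Ioo_mem_nhds (hξ c₀ hc₀).1.1 (hξ c₀ hc₀).1.2) (hpos.mono fun c hc => (hξ c hc).1) ?_
  rw [Function.comp_def, hroot c₀ hc₀]
  exact ((continuous_const_mul θ).tendsto c₀).congr' (hpos.mono fun c hc => (hroot c hc).symm)

theorem stmt_19_general
    (lam lamt ct : ℝ)
    (θ η st : ℝ)
    (ξ : ℝ → ℝ)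
    (hξ : ∀ c : ℝ, 0 < c → ξ c ∈ Set.Ioo 0 η ∧
      2 * ξ c + θ * c - η * Real.log ((η + ξ c) / (η - ξ c)) = 0)
    (Γ : ℝ → ℝ)
    (hΓ : ∀ c : ℝ, Γ c = θ * (c - ct) / (4 * ξ c)
      + θ * c * (lam - lamt) / (4 * η * ξ c) + (lam - lamt) / (2 * η))
    (xb1 xb2 xs1 xs2 : ℝ → ℝ)
    (hxb1 : ∀ c : ℝ, xb1 c = st - (1 / θ) * Real.log
      (Real.sqrt ((η + ξ c) / (η - ξ c)) * (Real.sqrt (Γ c + 1) + Real.sqrt (Γ c))))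
    (hxb2 : ∀ c : ℝ, xb2 c = st + (1 / θ) * Real.log
      (Real.sqrt ((η + ξ c) / (η - ξ c)) * (Real.sqrt (Γ c + 1) + Real.sqrt (Γ c))))
    (hxs1 : ∀ c : ℝ, xs1 c = st - (1 / θ) * Real.log
      (Real.sqrt ((η - ξ c) / (η + ξ c)) * (Real.sqrt (Γ c + 1) + Real.sqrt (Γ c))))
    (hxs2 : ∀ c : ℝ, xs2 c = st + (1 / θ) * Real.log
      (Real.sqrt ((η - ξ c) / (η + ξ c)) * (Real.sqrt (Γ c + 1) + Real.sqrt (Γ c))))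
    (hll : lam = lamt) (hct : 0 < ct) :
    Filter.Tendsto xb1 (nhdsWithin ct (Set.Ioi ct))
      (nhds (st - (1 / (2 * θ)) * Real.log ((η + ξ ct) / (η - ξ ct)))) ∧
    Filter.Tendsto xs2 (nhdsWithin ct (Set.Ioi ct))
      (nhds (st - (1 / (2 * θ)) * Real.log ((η + ξ ct) / (η - ξ ct)))) ∧
    Filter.Tendsto xb2 (nhdsWithin ct (Set.Ioi ct))
      (nhds (st + (1 / (2 * θ)) * Real.log ((η + ξ ct) / (η - ξ ct)))) ∧
    Filter.Tendsto xs1 (nhdsWithin ct (Set.Ioi ct))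
      (nhds (st + (1 / (2 * θ)) * Real.log ((η + ξ ct) / (η - ξ ct)))) := by
  obtain ⟨⟨hξ₀, hξη⟩, -⟩ := hξ ct hct
  have hξc : Tendsto ξ (𝓝[>] ct) (𝓝 (ξ ct)) :=
    (continuousAt_of_forall_root hξ hct).tendsto.mono_left nhdsWithin_le_nhds
  have hΓ₀ : Tendsto Γ (𝓝[>] ct) (𝓝 0) := by
    have := (((tendsto_nhdsWithin_of_tendsto_nhds tendsto_id).sub_const ct).const_mul θ).div
      (hξc.const_mul 4) (by positivity)
    simpa [funext hΓ, hll, Pi.div_def] using this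
  have hplus := tendsto_log_sqrt_mul_sqrt_add_sqrt (g := fun c => (η + ξ c) / (η - ξ c))
    (div_pos (by linarith) (by linarith))
    ((hξc.const_add η).div (tendsto_const_nhds.sub hξc) (by linarith)) hΓ₀
  have hminus := tendsto_log_sqrt_mul_sqrt_add_sqrt (g := fun c => (η - ξ c) / (η + ξ c))
    (div_pos (by linarith) (by linarith))
    ((tendsto_const_nhds.sub hξc).div (hξc.const_add η) (by linarith)) hΓ₀
  rw [← inv_div (η + ξ ct), log_inv] at hminus
  obtain rfl := funext hxb1
  obtain rfl := funext hxb2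
  obtain rfl := funext hxs1
  obtain rfl := funext hxs2
  refine ⟨?_, ?_, ?_, ?_⟩
  · convert (hplus.const_mul (1 / θ)).const_sub st using 2; ring
  · convert (hminus.const_mul (1 / θ)).const_add st using 2; ring
  · convert (hplus.const_mul (1 / θ)).const_add st using 2; ring
  · convert (hminus.const_mul (1 / θ)).const_sub st using 2; ring

/-- With λ = λ̃ and c̃ > 0, as c → c̃⁺ one has
x̄₁(c), x₂*(c) → s̃ − (1/(2θ))·log((η+ξ(c̃))/(η−ξ(c̃))) and
x̄₂(c), x₁*(c) → s̃ + (1/(2θ))·log((η+ξ(c̃))/(η−ξ(c̃))). -/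
theorem stmt_19
    (ρ σ lam lamt ct s1 s2 : ℝ) (hρ : 0 < ρ) (hσ : 0 < σ)
    (h1 : 0 < 1 - lam * ρ) (h2 : lamt ≤ lam) (h3 : 0 ≤ lamt)
    (h5 : 0 ≤ ct) (h8 : s1 < s2)
    (θ η st : ℝ) (hθ : θ = Real.sqrt (2 * ρ / σ ^ 2))
    (hη : η = (1 - lam * ρ) / ρ) (hst : st = (s1 + s2) / 2)
    (ξ : ℝ → ℝ)
    (hξ : ∀ c : ℝ, 0 < c → ξ c ∈ Set.Ioo 0 η ∧
      2 * ξ c + θ * c - η * Real.log ((η + ξ c) / (η - ξ c)) = 0)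
    (Γ : ℝ → ℝ)
    (hΓ : ∀ c : ℝ, Γ c = θ * (c - ct) / (4 * ξ c)
      + θ * c * (lam - lamt) / (4 * η * ξ c) + (lam - lamt) / (2 * η))
    (xb1 xb2 xs1 xs2 : ℝ → ℝ)
    (hxb1 : ∀ c : ℝ, xb1 c = st - (1 / θ) * Real.log
      (Real.sqrt ((η + ξ c) / (η - ξ c)) * (Real.sqrt (Γ c + 1) + Real.sqrt (Γ c))))
    (hxb2 : ∀ c : ℝ, xb2 c = st + (1 / θ) * Real.log
      (Real.sqrt ((η + ξ c) / (η - ξ c)) * (Real.sqrt (Γ c + 1) + Real.sqrt (Γ c))))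
    (hxs1 : ∀ c : ℝ, xs1 c = st - (1 / θ) * Real.log
      (Real.sqrt ((η - ξ c) / (η + ξ c)) * (Real.sqrt (Γ c + 1) + Real.sqrt (Γ c))))
    (hxs2 : ∀ c : ℝ, xs2 c = st + (1 / θ) * Real.log
      (Real.sqrt ((η - ξ c) / (η + ξ c)) * (Real.sqrt (Γ c + 1) + Real.sqrt (Γ c))))
    (A21 A22 : ℝ → ℝ)
    (hA21 : ∀ c : ℝ, A21 c = Real.exp (-(θ * st))
      * (Real.sqrt (η ^ 2 - (ξ c) ^ 2) / (2 * θ))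
      * (Real.sqrt (Γ c + 1) - Real.sqrt (Γ c)))
    (hA22 : ∀ c : ℝ, A22 c = Real.exp (θ * st)
      * (Real.sqrt (η ^ 2 - (ξ c) ^ 2) / (2 * θ))
      * (-Real.sqrt (Γ c + 1) - Real.sqrt (Γ c)))
    (hll : lam = lamt) (hct : 0 < ct) :
    Filter.Tendsto xb1 (nhdsWithin ct (Set.Ioi ct))
      (nhds (st - (1 / (2 * θ)) * Real.log ((η + ξ ct) / (η - ξ ct)))) ∧
    Filter.Tendsto xs2 (nhdsWithin ct (Set.Ioi ct))
      (nhds (st - (1 / (2 * θ)) * Real.log ((η + ξ ct) / (η - ξ ct)))) ∧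
    Filter.Tendsto xb2 (nhdsWithin ct (Set.Ioi ct))
      (nhds (st + (1 / (2 * θ)) * Real.log ((η + ξ ct) / (η - ξ ct)))) ∧
    Filter.Tendsto xs1 (nhdsWithin ct (Set.Ioi ct))
      (nhds (st + (1 / (2 * θ)) * Real.log ((η + ξ ct) / (η - ξ ct)))) :=
  stmt_19_general lam lamt ct θ η st ξ hξ Γ hΓ xb1 xb2 xs1 xs2 hxb1 hxb2 hxs1 hxs2 hll hct
end
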